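/- arXiv:2512.11765 — 5 statements merged into one kernel-verified Lean document; each statement's English description precedes it below -/
import Mathlib

section
/- Let n ≥ 2 be an integer, ρ > 0, θ ≥ 0, and 0 = t_0 < t_1 < ⋯ < t_N = T a time grid (N ≥ 1). Then each of the three matrices Γ^θ, Γ^θ + (n−1)·Γ̃, and Γ^θ − Γ̃ is positive, i.e. x^⊤ A x > 0 for every nonzero x ∈ ℝ^{N+1}. In particular each is invertible and the scalars 1^⊤(Γ^θ + (n−1)Γ̃)^{−1}1 and 1^⊤(Γ^θ − Γ̃)^{−1}1 are strictly positive. -/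
open Matrix Finset

noncomputable section

/-- The matrix `Γ^θ` of transient impact plus instantaneous costs, on the grid `t`. -/
def Gam (ρ θ : ℝ) {N : ℕ} (t : Fin (N + 1) → ℝ) : Matrix (Fin (N + 1)) (Fin (N + 1)) ℝ :=
  Matrix.of (fun i j => Real.exp (-(ρ * |t i - t j|)) + (if i = j then 2 * θ else 0))

/-- The matrix `Γ̃`. -/
def GamT (ρ : ℝ) {N : ℕ} (t : Fin (N + 1) → ℝ) : Matrix (Fin (N + 1)) (Fin (N + 1)) ℝ :=
  Matrix.of (fun i j =>
    if i < j then 0 else if i = j then 1 / 2 else Real.exp (-(ρ * (t i - t j))))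


/-- Quadratic form of the "min" kernel on an increasing positive sequence is positive. -/
lemma aux_min_pos (M : ℕ) (s z : ℕ → ℝ) (hs : ∀ k < M, s k < s (k + 1)) (hs0 : 0 < s 0)
    (hz : ∃ m, m < M + 1 ∧ z m ≠ 0) :
    0 < ∑ i ∈ range (M + 1), ∑ j ∈ range (M + 1), min (s i) (s j) * z i * z j := by
  set d : ℕ → ℝ := fun k => if k = 0 then s 0 else s k - s (k - 1) with hd
  have hmle : ∀ a b : ℕ, a ≤ b → b ≤ M → s a ≤ s b := by
    intro a b hab hbM
    induction b, hab using Nat.le_induction with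
    | base => exact le_refl _
    | succ b hab ih => exact le_trans (ih (by omega)) (le_of_lt (hs b (by omega)))
  have hd_tel : ∀ m, ∑ k ∈ range (m + 1), d k = s m := by
    intro m
    induction m with
    | zero => simp [hd]
    | succ m ih =>
      rw [Finset.sum_range_succ, ih]
      simp only [hd]
      rw [if_neg (Nat.succ_ne_zero m)]
      simp
  have hd_pos : ∀ k < M + 1, 0 < d k := by
    intro k hk
    match k with
    | 0 => simpa [hd] using hs0
    | (j+1) =>
      simp only [hd, if_neg (Nat.succ_ne_zero j), Nat.add_sub_cancel]
      have := hs j (by omega)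
      linarith
  set y : ℕ → ℝ := fun k => ∑ i ∈ range (M + 1), if k ≤ i then z i else 0 with hy
  have key : ∑ i ∈ range (M + 1), ∑ j ∈ range (M + 1), min (s i) (s j) * z i * z j
      = ∑ k ∈ range (M + 1), d k * (y k * y k) := by
    have hmin : ∀ i ∈ range (M + 1), ∀ j ∈ range (M + 1),
        min (s i) (s j) * z i * z j
          = ∑ k ∈ range (M + 1), d k * ((if k ≤ i then z i else 0) * (if k ≤ j then z j else 0)) := by
      intro i hi j hj
      rw [Finset.mem_range] at hi hj
      have h1 : min (s i) (s j) = s (min i j) := by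
        rcases le_total i j with h | h
        · rw [min_eq_left h, min_eq_left (hmle i j h (by omega))]
        · rw [min_eq_right h, min_eq_right (hmle j i h (by omega))]
      have h2 : ∀ k, d k * ((if k ≤ i then z i else 0) * (if k ≤ j then z j else 0))
          = (if k ≤ min i j then d k else 0) * (z i * z j) := by
        intro k
        by_cases hki : k ≤ i <;> by_cases hkj : k ≤ j <;>
          simp [hki, hkj, le_min_iff] <;> ring
      rw [Finset.sum_congr rfl (fun k _ => h2 k), ← Finset.sum_mul]
      have h3 : ∑ k ∈ range (M + 1), (if k ≤ min i j then d k else 0)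
          = ∑ k ∈ range (min i j + 1), d k := by
        rw [← Finset.sum_filter]
        congr 1
        ext k
        simp only [Finset.mem_filter, Finset.mem_range]
        omega
      rw [h3, hd_tel, h1]
      ring
    rw [Finset.sum_congr rfl (fun i hi => Finset.sum_congr rfl (fun j hj => hmin i hi j hj))]
    have expand : ∀ k, d k * (y k * y k)
        = ∑ i ∈ range (M + 1), ∑ j ∈ range (M + 1),
            d k * ((if k ≤ i then z i else 0) * (if k ≤ j then z j else 0)) := by
      intro k
      rw [hy]
      simp only
      rw [Finset.sum_mul_sum, Finset.mul_sum]
      exact Finset.sum_congr rfl fun i _ => by rw [Finset.mul_sum]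
    rw [Finset.sum_congr rfl (fun k _ => expand k)]
    exact (Finset.sum_congr rfl fun i _ => Finset.sum_comm).trans Finset.sum_comm
  rw [key]
  have hynz : ∃ k, k < M + 1 ∧ y k ≠ 0 := by
    by_contra h
    push_neg at h
    have hyz : ∀ k, y k = 0 := by
      intro k
      by_cases hk : k < M + 1
      · exact h k hk
      · rw [hy]
        simp only
        refine Finset.sum_eq_zero fun i hi => ?_
        rw [Finset.mem_range] at hi
        rw [if_neg (by omega)]
    obtain ⟨m, hm, hzm⟩ := hz
    apply hzm
    have : z m = y m - y (m + 1) := by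
      rw [hy]
      simp only
      rw [← Finset.sum_sub_distrib]
      have : ∀ i ∈ range (M + 1),
          ((if m ≤ i then z i else 0) - (if m + 1 ≤ i then z i else 0))
            = if i = m then z i else 0 := by
        intro i hi
        rcases lt_trichotomy i m with h' | h' | h'
        · rw [if_neg (by omega), if_neg (by omega), if_neg (by omega)]; ring
        · rw [if_pos (by omega), if_neg (by omega), if_pos (by omega)]; ring
        · rw [if_pos (by omega), if_pos (by omega), if_neg (by omega)]; ring
      rw [Finset.sum_congr rfl this, Finset.sum_ite_eq' (range (M + 1)) m z,
        if_pos (Finset.mem_range.mpr hm)]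
    rw [this, hyz m, hyz (m + 1), sub_zero]
  obtain ⟨k₀, hk₀, hyk₀⟩ := hynz
  refine Finset.sum_pos' (fun k hk => ?_) ⟨k₀, Finset.mem_range.mpr hk₀, ?_⟩
  · exact mul_nonneg (le_of_lt (hd_pos k (Finset.mem_range.mp hk))) (mul_self_nonneg _)
  · exact mul_pos (hd_pos k₀ hk₀) (mul_self_pos.mpr hyk₀)

lemma gam0_pos (ρ : ℝ) (hρ : 0 < ρ) {N : ℕ} (t : Fin (N + 1) → ℝ) (hmono : StrictMono t)
    (x : Fin (N + 1) → ℝ) (hx : x ≠ 0) : 0 < x ⬝ᵥ (Gam ρ 0 t).mulVec x := by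
  classical
  set sN : ℕ → ℝ := fun m => if h : m < N + 1 then Real.exp (2 * ρ * t ⟨m, h⟩) else 0 with hsN
  set zN : ℕ → ℝ := fun m =>
    if h : m < N + 1 then x ⟨m, h⟩ * Real.exp (-(ρ * t ⟨m, h⟩)) else 0 with hzN
  have hterm : ∀ i j : Fin (N + 1),
      x i * (Gam ρ 0 t i j * x j) = min (sN i) (sN j) * zN i * zN j := by
    intro i j
    have hi : (i : ℕ) < N + 1 := i.isLt
    have hj : (j : ℕ) < N + 1 := j.isLt
    have hsi : sN i = Real.exp (2 * ρ * t i) := by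
      rw [hsN]; simp only [dif_pos hi]
    have hsj : sN j = Real.exp (2 * ρ * t j) := by
      rw [hsN]; simp only [dif_pos hj]
    have hzi : zN i = x i * Real.exp (-(ρ * t i)) := by
      rw [hzN]; simp only [dif_pos hi]
    have hzj : zN j = x j * Real.exp (-(ρ * t j)) := by
      rw [hzN]; simp only [dif_pos hj]
    rw [hsi, hsj, hzi, hzj]
    have hmin : min (Real.exp (2 * ρ * t i)) (Real.exp (2 * ρ * t j))
        = Real.exp (2 * ρ * min (t i) (t j)) := by
      rcases le_total (t i) (t j) with h | h
      · rw [min_eq_left h, min_eq_left (Real.exp_le_exp.mpr (by nlinarith))]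
      · rw [min_eq_right h, min_eq_right (Real.exp_le_exp.mpr (by nlinarith))]
    rw [hmin]
    have hGam : Gam ρ 0 t i j = Real.exp (-(ρ * |t i - t j|)) := by
      simp [Gam]
    rw [hGam]
    have harg : 2 * ρ * min (t i) (t j) + -(ρ * t i) + -(ρ * t j) = -(ρ * |t i - t j|) := by
      rcases le_total (t i) (t j) with h | h
      · rw [min_eq_left h, abs_of_nonpos (by linarith)]; ring
      · rw [min_eq_right h, abs_of_nonneg (by linarith)]; ring
    calc x i * (Real.exp (-(ρ * |t i - t j|)) * x j)
        = Real.exp (-(ρ * |t i - t j|)) * (x i * x j) := by ring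
      _ = Real.exp (2 * ρ * min (t i) (t j)) * Real.exp (-(ρ * t i)) * Real.exp (-(ρ * t j))
            * (x i * x j) := by rw [← Real.exp_add, ← Real.exp_add, harg]
      _ = Real.exp (2 * ρ * min (t i) (t j)) * (x i * Real.exp (-(ρ * t i)))
            * (x j * Real.exp (-(ρ * t j))) := by ring
  have hform : x ⬝ᵥ (Gam ρ 0 t).mulVec x
      = ∑ i ∈ range (N + 1), ∑ j ∈ range (N + 1), min (sN i) (sN j) * zN i * zN j := by
    rw [dotProduct, ]
    simp only [mulVec, dotProduct, Finset.mul_sum]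
    have h1 : ∀ i : Fin (N + 1), ∑ j : Fin (N + 1), x i * (Gam ρ 0 t i j * x j)
        = ∑ j ∈ range (N + 1), min (sN i) (sN j) * zN i * zN j := by
      intro i
      rw [← Fin.sum_univ_eq_sum_range (fun j => min (sN i) (sN j) * zN i * zN j)]
      exact Finset.sum_congr rfl fun j _ => hterm i j
    rw [Finset.sum_congr rfl (fun i _ => h1 i)]
    exact Fin.sum_univ_eq_sum_range (fun i => ∑ j ∈ range (N + 1), min (sN i) (sN j) * zN i * zN j) _
  rw [hform]
  apply aux_min_pos
  · intro k hk
    rw [hsN]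
    simp only [dif_pos (by omega : k < N + 1), dif_pos (by omega : k + 1 < N + 1)]
    exact Real.exp_lt_exp.mpr (by nlinarith [hmono (show (⟨k, by omega⟩ : Fin (N+1)) < ⟨k+1, by omega⟩ from by simp [Fin.lt_def])])
  · rw [hsN]; simp only [dif_pos (by omega : 0 < N + 1)]; exact Real.exp_pos _
  · obtain ⟨i, hi⟩ := Function.ne_iff.mp hx
    exact ⟨i, i.isLt, by
      rw [hzN]
      simp only [dif_pos i.isLt, Fin.eta]
      exact mul_ne_zero hi (Real.exp_ne_zero _)⟩

lemma gamT_add_transpose (ρ : ℝ) {N : ℕ} (t : Fin (N + 1) → ℝ) (hmono : StrictMono t) :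
    GamT ρ t + (GamT ρ t)ᵀ = Gam ρ 0 t := by
  ext i j
  simp only [Gam, GamT, Matrix.add_apply, Matrix.transpose_apply, Matrix.of_apply]
  rcases lt_trichotomy i j with h | h | h
  · have hij : t i < t j := hmono h
    rw [if_pos h, if_neg (not_lt.2 h.le), if_neg h.ne', if_neg h.ne,
      abs_of_neg (sub_neg.mpr hij), show -(ρ * -(t i - t j)) = -(ρ * (t j - t i)) by ring]
    ring
  · subst h
    simp
    norm_num
  · have hij : t j < t i := hmono h
    rw [if_neg (not_lt.2 h.le), if_pos h, if_neg h.ne',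
      abs_of_pos (sub_pos.mpr hij)]
    simp
lemma quad_transpose {N : ℕ} (A : Matrix (Fin (N + 1)) (Fin (N + 1)) ℝ) (x : Fin (N + 1) → ℝ) :
    x ⬝ᵥ Aᵀ.mulVec x = x ⬝ᵥ A.mulVec x := by
  rw [dotProduct_mulVec, vecMul_transpose, dotProduct_comm, dotProduct_mulVec]

lemma gamT_quad (ρ : ℝ) {N : ℕ} (t : Fin (N + 1) → ℝ) (hmono : StrictMono t)
    (x : Fin (N + 1) → ℝ) :
    x ⬝ᵥ (GamT ρ t).mulVec x = x ⬝ᵥ (Gam ρ 0 t).mulVec x / 2 := by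
  have h := gamT_add_transpose ρ t hmono
  have h2 : x ⬝ᵥ (Gam ρ 0 t).mulVec x
      = x ⬝ᵥ (GamT ρ t).mulVec x + x ⬝ᵥ (GamT ρ t)ᵀ.mulVec x := by
    rw [← h, add_mulVec, dotProduct_add]
  rw [quad_transpose] at h2
  linarith

lemma gam_split (ρ θ : ℝ) {N : ℕ} (t : Fin (N + 1) → ℝ) :
    Gam ρ θ t = Gam ρ 0 t + (2 * θ) • (1 : Matrix (Fin (N + 1)) (Fin (N + 1)) ℝ) := by
  ext i j
  simp only [Gam, Matrix.add_apply, Matrix.smul_apply, Matrix.one_apply, Matrix.of_apply,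
    smul_eq_mul]
  by_cases h : i = j <;> simp [h]

lemma gam_quad (ρ θ : ℝ) {N : ℕ} (t : Fin (N + 1) → ℝ) (x : Fin (N + 1) → ℝ) :
    x ⬝ᵥ (Gam ρ θ t).mulVec x = x ⬝ᵥ (Gam ρ 0 t).mulVec x + 2 * θ * (x ⬝ᵥ x) := by
  rw [gam_split ρ θ t, add_mulVec, dotProduct_add, smul_mulVec, one_mulVec,
    dotProduct_smul, smul_eq_mul]

lemma det_isUnit_of_pos {N : ℕ} (A : Matrix (Fin (N + 1)) (Fin (N + 1)) ℝ)
    (hA : ∀ x : Fin (N + 1) → ℝ, x ≠ 0 → 0 < x ⬝ᵥ A.mulVec x) : IsUnit A.det := by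
  rw [isUnit_iff_ne_zero]
  intro hdet
  obtain ⟨v, hv, hAv⟩ := (Matrix.exists_mulVec_eq_zero_iff).mpr hdet
  have := hA v hv
  rw [hAv, dotProduct_zero] at this
  exact lt_irrefl 0 this

lemma inv_quad_pos {N : ℕ} (A : Matrix (Fin (N + 1)) (Fin (N + 1)) ℝ)
    (hA : ∀ x : Fin (N + 1) → ℝ, x ≠ 0 → 0 < x ⬝ᵥ A.mulVec x) :
    0 < (1 : Fin (N + 1) → ℝ) ⬝ᵥ (A⁻¹.mulVec 1) := by
  have hdet : IsUnit A.det := det_isUnit_of_pos A hA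
  set y : Fin (N + 1) → ℝ := A⁻¹.mulVec 1 with hy
  have hAy : A.mulVec y = 1 := by
    rw [hy, mulVec_mulVec, Matrix.mul_nonsing_inv A hdet, one_mulVec]
  have hyne : y ≠ 0 := by
    intro h0
    rw [h0, mulVec_zero] at hAy
    have : (1 : Fin (N + 1) → ℝ) 0 = 0 := by rw [← hAy]; rfl
    simp at this
  have hpos := hA y hyne
  rw [hAy, dotProduct_one] at hpos
  rw [one_dotProduct]
  rw [hy] at hpos ⊢
  exact hpos

/-- The matrices `Γ^θ`, `Γ^θ + (n−1)Γ̃` and `Γ^θ − Γ̃` are positive (positive definite in the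
possibly non-symmetric sense); in particular they are invertible and the scalars
`1^⊤ (Γ^θ + (n−1)Γ̃)^{−1} 1` and `1^⊤ (Γ^θ − Γ̃)^{−1} 1` are strictly positive. -/
theorem stmt0 (n : ℕ) (hn : 2 ≤ n) (ρ θ T : ℝ) (hρ : 0 < ρ) (hθ : 0 ≤ θ)
    (N : ℕ) (hN : 1 ≤ N) (t : Fin (N + 1) → ℝ)
    (ht0 : t 0 = 0) (htT : t (Fin.last N) = T) (hmono : StrictMono t) :
    (∀ x : Fin (N + 1) → ℝ, x ≠ 0 → 0 < x ⬝ᵥ (Gam ρ θ t).mulVec x) ∧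
    (∀ x : Fin (N + 1) → ℝ, x ≠ 0 →
      0 < x ⬝ᵥ (Gam ρ θ t + ((n : ℝ) - 1) • GamT ρ t).mulVec x) ∧
    (∀ x : Fin (N + 1) → ℝ, x ≠ 0 →
      0 < x ⬝ᵥ (Gam ρ θ t - GamT ρ t).mulVec x) ∧
    IsUnit (Gam ρ θ t).det ∧
    IsUnit (Gam ρ θ t + ((n : ℝ) - 1) • GamT ρ t).det ∧
    IsUnit (Gam ρ θ t - GamT ρ t).det ∧
    0 < (1 : Fin (N + 1) → ℝ) ⬝ᵥ ((Gam ρ θ t + ((n : ℝ) - 1) • GamT ρ t)⁻¹.mulVec 1) ∧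
    0 < (1 : Fin (N + 1) → ℝ) ⬝ᵥ ((Gam ρ θ t - GamT ρ t)⁻¹.mulVec 1) := by
  have hxx : ∀ x : Fin (N + 1) → ℝ, 0 ≤ x ⬝ᵥ x := by
    intro x
    rw [dotProduct]
    exact Finset.sum_nonneg fun i _ => mul_self_nonneg _
  have hP1 : ∀ x : Fin (N + 1) → ℝ, x ≠ 0 → 0 < x ⬝ᵥ (Gam ρ θ t).mulVec x := by
    intro x hx
    rw [gam_quad]
    have h0 := gam0_pos ρ hρ t hmono x hx
    nlinarith [hxx x]
  have hP2 : ∀ x : Fin (N + 1) → ℝ, x ≠ 0 →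
      0 < x ⬝ᵥ (Gam ρ θ t + ((n : ℝ) - 1) • GamT ρ t).mulVec x := by
    intro x hx
    rw [add_mulVec, dotProduct_add, smul_mulVec, dotProduct_smul, smul_eq_mul,
      gamT_quad ρ t hmono, gam_quad]
    have h0 := gam0_pos ρ hρ t hmono x hx
    have hn1 : (1 : ℝ) ≤ (n : ℝ) - 1 := by
      have : (2 : ℝ) ≤ (n : ℝ) := by exact_mod_cast hn
      linarith
    nlinarith [hxx x]
  have hP3 : ∀ x : Fin (N + 1) → ℝ, x ≠ 0 →
      0 < x ⬝ᵥ (Gam ρ θ t - GamT ρ t).mulVec x := by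
    intro x hx
    rw [sub_mulVec, dotProduct_sub, gamT_quad ρ t hmono, gam_quad]
    have h0 := gam0_pos ρ hρ t hmono x hx
    nlinarith [hxx x]
  exact ⟨hP1, hP2, hP3, det_isUnit_of_pos _ hP1, det_isUnit_of_pos _ hP2,
    det_isUnit_of_pos _ hP3, inv_quad_pos _ hP2, inv_quad_pos _ hP3⟩
end
end

section
/- Let n ≥ 2 be an integer, ρ > 0, θ ≥ 0, and 0 = t_0 < t_1 < ⋯ < t_N = T a time grid. For vectors ξ_1,…,ξ_n ∈ ℝ^{N+1} (component k+1 of ξ_j being the trade of agent j at date t_k, k = 0,…,N), and for each i ∈ {1,…,n}, the execution cost with zero unaffected price, C_i := Σ_{k=0}^{N} [ (1/2 + θ)·ξ_{i,k}² + (1/2)·Σ_{j≠i} ξ_{i,k} ξ_{j,k} + ξ_{i,k}·Σ_{l=0}^{k−1} e^{−ρ(t_k − t_l)}·Σ_{j=1}^{n} ξ_{j,l} ], satisfies C_i = (1/2)·ξ_i^⊤ Γ^θ ξ_i + ξ_i^⊤ Γ̃ (Σ_{j≠i} ξ_j). -/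
open Matrix Finset

noncomputable section

lemma sym_sum {M : ℕ} (f : Fin M → Fin M → ℝ) (hf : ∀ k l, f k l = f l k) :
    ∑ k, ∑ l, f k l
      = ∑ k, f k k + 2 * ∑ k, ∑ l, (if l < k then f k l else 0) := by
  have h1 : ∀ k : Fin M, (∑ l, f k l)
      = f k k + (∑ l, if l < k then f k l else 0) + (∑ l, if k < l then f k l else 0) := by
    intro k
    have hp : ∀ l : Fin M, f k l =
        (if l = k then f k l else 0) + (if l < k then f k l else 0)
          + (if k < l then f k l else 0) := by
      intro l
      rcases lt_trichotomy l k with h | h | h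
      · simp [h, h.ne, not_lt.mpr h.le]
      · simp [h, lt_irrefl]
      · simp [h, h.ne', not_lt.mpr h.le]
    calc (∑ l, f k l) = ∑ l, ((if l = k then f k l else 0) + (if l < k then f k l else 0)
          + (if k < l then f k l else 0)) := Finset.sum_congr rfl (fun l _ => hp l)
      _ = _ := by
          rw [Finset.sum_add_distrib, Finset.sum_add_distrib, Finset.sum_ite_eq' _ k (f k)]
          simp
  have hswap : (∑ k : Fin M, ∑ l, if k < l then f k l else 0)
      = ∑ k : Fin M, ∑ l, if l < k then f k l else 0 := by
    rw [Finset.sum_comm]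
    exact Finset.sum_congr rfl fun k _ => Finset.sum_congr rfl fun l _ => by
      rcases lt_or_ge l k with h | h
      · simp [h, hf]
      · simp [not_lt.mpr h]
  calc ∑ k, ∑ l, f k l = ∑ k, (f k k + (∑ l, if l < k then f k l else 0)
        + (∑ l, if k < l then f k l else 0)) := Finset.sum_congr rfl fun k _ => h1 k
    _ = _ := by
        rw [Finset.sum_add_distrib, Finset.sum_add_distrib, hswap]; ring

/-- Explicit form of the execution cost functional (with zero unaffected price):
`C_i = (1/2) ξ_i^⊤ Γ^θ ξ_i + ξ_i^⊤ Γ̃ (Σ_{j≠i} ξ_j)`. -/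
theorem stmt1 (n : ℕ) (hn : 2 ≤ n) (ρ θ T : ℝ) (hρ : 0 < ρ) (hθ : 0 ≤ θ)
    (N : ℕ) (hN : 1 ≤ N) (t : Fin (N + 1) → ℝ)
    (ht0 : t 0 = 0) (htT : t (Fin.last N) = T) (hmono : StrictMono t)
    (ξ : Fin n → Fin (N + 1) → ℝ) (i : Fin n) :
    (∑ k : Fin (N + 1),
      ((1 / 2 + θ) * ξ i k ^ 2
        + (1 / 2) * ∑ j ∈ Finset.univ.erase i, ξ i k * ξ j k
        + ξ i k * ∑ l : Fin (N + 1),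
            (if l < k then Real.exp (-(ρ * (t k - t l))) * ∑ j : Fin n, ξ j l else 0)))
    = (1 / 2) * (ξ i ⬝ᵥ (Gam ρ θ t).mulVec (ξ i))
      + ξ i ⬝ᵥ (GamT ρ t).mulVec (∑ j ∈ Finset.univ.erase i, ξ j) := by
  classical
  set a : Fin (N + 1) → ℝ := ξ i with ha
  set S : Fin (N + 1) → ℝ := fun l => ∑ j ∈ Finset.univ.erase i, ξ j l with hSdef
  set e : Fin (N + 1) → Fin (N + 1) → ℝ :=
    fun k l => Real.exp (-(ρ * (t k - t l))) with he
  -- total sum split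
  have hS : ∀ l, (∑ j : Fin n, ξ j l) = a l + S l := by
    intro l
    rw [← Finset.add_sum_erase _ _ (Finset.mem_univ i)]
  -- Gam part
  have hGam : ξ i ⬝ᵥ (Gam ρ θ t).mulVec (ξ i)
      = (1 + 2 * θ) * ∑ k, a k ^ 2
        + 2 * ∑ k, ∑ l, (if l < k then e k l * (a k * a l) else 0) := by
    have hE : ∀ k l : Fin (N + 1),
        a k * (Real.exp (-(ρ * |t k - t l|)) * a l)
          = a l * (Real.exp (-(ρ * |t l - t k|)) * a k) := by
      intro k l; rw [abs_sub_comm]; ring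
    have step : ξ i ⬝ᵥ (Gam ρ θ t).mulVec (ξ i)
        = (∑ k, ∑ l, a k * (Real.exp (-(ρ * |t k - t l|)) * a l))
          + 2 * θ * ∑ k, a k ^ 2 := by
      simp only [dotProduct, Matrix.mulVec, Gam, Matrix.of_apply, add_mul,
        ite_mul, zero_mul, Finset.sum_add_distrib, mul_add, Finset.mul_sum]
      congr 1
      refine Finset.sum_congr rfl fun k _ => ?_
      simp only [mul_ite, mul_zero]
      rw [Finset.sum_ite_eq _ k (fun l => ξ i k * (2 * θ * ξ i l))]
      simp [sq]; ring
    rw [step, sym_sum _ hE]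
    have hd : ∀ k : Fin (N + 1),
        a k * (Real.exp (-(ρ * |t k - t k|)) * a k) = a k ^ 2 := by
      intro k; simp [sq]
    have hlt : ∀ k l : Fin (N + 1),
        (if l < k then a k * (Real.exp (-(ρ * |t k - t l|)) * a l) else 0)
          = (if l < k then e k l * (a k * a l) else 0) := by
      intro k l
      rcases lt_or_ge l k with h | h
      · have : |t k - t l| = t k - t l := abs_of_pos (by linarith [hmono h])
        simp only [if_pos h, this, he]; ring
      · simp [not_lt.mpr h]
    simp only [hd, hlt]
    ring
  -- GamT part
  have hGT : ∀ k l : Fin (N + 1), (GamT ρ t) k l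
      = (if l = k then (1 : ℝ) / 2 else 0) + (if l < k then e k l else 0) := by
    intro k l
    rcases lt_trichotomy l k with h | h | h
    · simp [GamT, h, h.ne, h.ne', not_lt.mpr h.le, he]
    · simp [GamT, h, lt_irrefl]
    · simp [GamT, h, h.ne, h.ne', not_lt.mpr h.le]
  have hGamT : ξ i ⬝ᵥ (GamT ρ t).mulVec (∑ j ∈ Finset.univ.erase i, ξ j)
      = ∑ k, ((1 : ℝ) / 2 * (a k * S k)
          + ∑ l, (if l < k then e k l * (a k * S l) else 0)) := by
    have hSv : ∀ l, (∑ j ∈ Finset.univ.erase i, ξ j) l = S l := by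
      intro l; simp [hSdef]
    simp only [dotProduct, Matrix.mulVec, hGT, add_mul, ite_mul, zero_mul,
      Finset.sum_add_distrib, mul_add, Finset.mul_sum, hSv]
    congr 1
    · apply Finset.sum_congr rfl
      intro k _
      simp only [mul_ite, mul_zero]
      rw [Finset.sum_ite_eq' _ k (fun l => ξ i k * (1 / 2 * S l))]
      simp; ring
    · apply Finset.sum_congr rfl
      intro k _
      apply Finset.sum_congr rfl
      intro l _
      rcases lt_or_ge l k with h | h
      · simp [h]; ring
      · simp [not_lt.mpr h]
  -- now both sides
  rw [hGam, hGamT]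
  have hLHS : ∀ k : Fin (N + 1),
      ξ i k * (∑ l, (if l < k then Real.exp (-(ρ * (t k - t l))) * ∑ j : Fin n, ξ j l else 0))
        = (∑ l, (if l < k then e k l * (a k * a l) else 0))
          + (∑ l, (if l < k then e k l * (a k * S l) else 0)) := by
    intro k
    rw [Finset.mul_sum, ← Finset.sum_add_distrib]
    refine Finset.sum_congr rfl fun l _ => ?_
    rcases lt_or_ge l k with h | h
    · simp only [if_pos h, hS l, he]; ring
    · simp [not_lt.mpr h]
  have hmid : ∀ k : Fin (N + 1),
      (1 / 2 : ℝ) * ∑ j ∈ Finset.univ.erase i, ξ i k * ξ j k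
        = 1 / 2 * (a k * S k) := by
    intro k
    rw [← Finset.mul_sum, hSdef]
  rw [← ha] at hLHS hmid
  simp only [hLHS, hmid]
  rw [Finset.sum_add_distrib, Finset.sum_add_distrib, Finset.sum_add_distrib,
    Finset.sum_add_distrib]
  have hsq : ∑ k, (1 / 2 + θ) * ξ i k ^ 2 = (1 / 2 + θ) * ∑ k, a k ^ 2 := by
    rw [Finset.mul_sum]
  rw [hsq]
  ring
end
end

section
/- Let n ≥ 2 be an integer, ρ > 0, T > 0, θ ≥ 0, N ≥ 2, and use the equidistant grid t_k = kT/N. With α := e^{−ρT/N} and κ̃ := 2θ + 1/2, the vector ω := (Γ^θ − Γ̃)^{−1}1 has components ω_i = [ (1−α)·κ̃ + α·(α(κ̃−1)/κ̃)^{N+1−i} ] / [ κ̃·(κ̃ − α(κ̃−1)) ] for i = 1,…,N+1; in particular ω_{N+1} = 1/κ̃. -/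
open Matrix Finset

noncomputable section

/-- The equidistant grid `t_k = kT/N`. -/
def egrid (T : ℝ) (N : ℕ) : Fin (N + 1) → ℝ := fun k => (k.val : ℝ) * T / (N : ℝ)

/-- `ω := (Γ^θ − Γ̃)^{−1} 1` on the equidistant grid. -/
def omN (N : ℕ) (ρ T θ : ℝ) : Fin (N + 1) → ℝ :=
  (Gam ρ θ (egrid T N) - GamT ρ (egrid T N))⁻¹.mulVec 1

private lemma key_sum (α κt : ℝ) (hκ : κt ≠ 0) (k : ℕ) :
    κt * ((1 - α) * κt + α * (α * (κt - 1) / κt) ^ k)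
      + ∑ m ∈ Finset.range k,
          α ^ (m + 1) * ((1 - α) * κt + α * (α * (κt - 1) / κt) ^ (k - (m + 1)))
    = κt * (κt - α * (κt - 1)) := by
  induction k with
  | zero => simp only [pow_zero, Finset.range_zero, Finset.sum_empty, mul_one, add_zero]; ring
  | succ k ih =>
      rw [Finset.sum_range_succ']
      have hred : ∀ m : ℕ, k + 1 - (m + 1 + 1) = k - (m + 1) := by intro m; omega
      have h2 : ∀ m ∈ Finset.range k,
          α ^ (m + 1 + 1) * ((1 - α) * κt + α * (α * (κt - 1) / κt) ^ (k + 1 - (m + 1 + 1)))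
          = α * (α ^ (m + 1) * ((1 - α) * κt + α * (α * (κt - 1) / κt) ^ (k - (m + 1)))) := by
        intro m _; rw [hred]; ring
      rw [Finset.sum_congr rfl h2, ← Finset.mul_sum]
      have h3 : ∑ m ∈ Finset.range k,
          α ^ (m + 1) * ((1 - α) * κt + α * (α * (κt - 1) / κt) ^ (k - (m + 1)))
          = κt * (κt - α * (κt - 1)) - κt * ((1 - α) * κt + α * (α * (κt - 1) / κt) ^ k) := by
        linarith [ih]
      rw [h3]
      simp only [Nat.add_sub_cancel, pow_succ]
      field_simp
      ring

private lemma entryA (ρ T θ : ℝ) (hT : 0 < T) (N : ℕ) (hNp : 0 < N)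
    (i j : Fin (N + 1)) :
    (Gam ρ θ (egrid T N) - GamT ρ (egrid T N)) i j
      = if (i : ℕ) < (j : ℕ) then (Real.exp (-(ρ * T / N))) ^ ((j : ℕ) - (i : ℕ))
        else if i = j then 2 * θ + 1 / 2 else 0 := by
  have hN' : (0:ℝ) < (N:ℝ) := by exact_mod_cast hNp
  have hmono : ∀ a b : ℕ, a ≤ b → (a : ℝ) * T / N ≤ (b : ℝ) * T / N := by
    intro a b hab
    have : (a:ℝ) ≤ b := by exact_mod_cast hab
    gcongr
  simp only [Matrix.sub_apply, Gam, GamT, egrid, Matrix.of_apply]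
  rcases lt_trichotomy i j with h | h | h
  · have hij : (i:ℕ) < (j:ℕ) := h
    rw [if_pos hij, if_pos h, if_neg (ne_of_lt h)]
    have habs : |(i.val:ℝ) * T / N - (j.val:ℝ) * T / N|
        = ((j.val - i.val : ℕ) : ℝ) * T / N := by
      rw [abs_sub_comm, abs_of_nonneg (by linarith [hmono i.val j.val hij.le]),
        Nat.cast_sub hij.le]
      ring
    rw [habs, ← Real.exp_nat_mul, add_zero, sub_zero]
    congr 1
    ring
  · subst h
    simp only [lt_irrefl, if_false, if_pos rfl, sub_self, abs_zero, mul_zero,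
      neg_zero, Real.exp_zero]
    norm_num
    ring
  · have hji : (j:ℕ) < (i:ℕ) := h
    have hne : i ≠ j := ne_of_gt (show i > j from h)
    have habs : |(i.val:ℝ) * T / N - (j.val:ℝ) * T / N|
        = (i.val:ℝ) * T / N - (j.val:ℝ) * T / N :=
      abs_of_nonneg (by linarith [hmono j.val i.val hji.le])
    simp only [if_neg (show ¬ (i:ℕ) < (j:ℕ) by omega), if_neg (not_lt_of_gt h), hne,
      if_false, habs]
    ring


/-- Closed form of the components of `ω` (paper index `i ∈ {1,…,N+1}` corresponds to
Lean index `i.val = i − 1`, so the paper exponent `N+1−i` is `N − i.val`);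
in particular `ω_{N+1} = 1/κ̃`. -/
theorem stmt4 (n : ℕ) (hn : 2 ≤ n) (ρ T θ : ℝ) (hρ : 0 < ρ) (hT : 0 < T) (hθ : 0 ≤ θ)
    (N : ℕ) (hN : 2 ≤ N) (α κt : ℝ)
    (hα : α = Real.exp (-(ρ * T / N))) (hκt : κt = 2 * θ + 1 / 2) :
    (∀ i : Fin (N + 1),
      omN N ρ T θ i
        = ((1 - α) * κt + α * (α * (κt - 1) / κt) ^ (N - i.val))
          / (κt * (κt - α * (κt - 1)))) ∧
    omN N ρ T θ (Fin.last N) = 1 / κt := by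
  have hNp : 0 < N := by omega
  have hκpos : (0:ℝ) < κt := by rw [hκt]; linarith
  have hκ : κt ≠ 0 := ne_of_gt hκpos
  have hα0 : 0 < α := hα ▸ Real.exp_pos _
  have hα1 : α < 1 := by
    rw [hα, Real.exp_lt_one_iff]
    have hN' : (0:ℝ) < (N:ℝ) := by exact_mod_cast hNp
    have : 0 < ρ * T / N := by positivity
    linarith
  have hDpos : (0:ℝ) < κt - α * (κt - 1) := by nlinarith
  have hDne : κt * (κt - α * (κt - 1)) ≠ 0 := ne_of_gt (mul_pos hκpos hDpos)
  set D : ℝ := κt * (κt - α * (κt - 1)) with hD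
  set w : Fin (N + 1) → ℝ :=
    fun i => ((1 - α) * κt + α * (α * (κt - 1) / κt) ^ (N - i.val)) / D with hw
  set A := Gam ρ θ (egrid T N) - GamT ρ (egrid T N) with hA
  have hAe : ∀ i j : Fin (N + 1), A i j
      = if (i : ℕ) < (j : ℕ) then α ^ ((j : ℕ) - (i : ℕ)) else if i = j then κt else 0 := by
    intro i j
    rw [hA, entryA ρ T θ hT N hNp, ← hα, ← hκt]
  -- the key row computation
  have hmv : A.mulVec w = 1 := by
    funext i
    show ∑ j, A i j * w j = 1
    set g : ℕ → ℝ := fun j =>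
      (if i.val < j then α ^ (j - i.val) else if j = i.val then κt else 0)
        * (((1 - α) * κt + α * (α * (κt - 1) / κt) ^ (N - j)) / D) with hg
    have h1 : ∀ j : Fin (N + 1), A i j * w j = g j.val := by
      intro j
      rw [hAe, hw, hg]
      by_cases hij : (i:ℕ) < (j:ℕ)
      · simp [hij]
      · by_cases he : i = j
        · subst he; simp
        · have : ¬ (j:ℕ) = (i:ℕ) := fun hh => he (Fin.ext hh.symm)
          simp [hij, he, this]
    rw [Finset.sum_congr rfl (fun j _ => h1 j), Fin.sum_univ_eq_sum_range g (N + 1)]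
    have hsplit : ∑ j ∈ Finset.range (N + 1), g j
        = (∑ j ∈ Finset.Ico 0 (i.val + 1), g j) + ∑ j ∈ Finset.Ico (i.val + 1) (N + 1), g j := by
      rw [Finset.sum_Ico_consecutive _ (Nat.zero_le _) (by omega), ← Finset.range_eq_Ico]
    rw [hsplit, ← Finset.range_eq_Ico, Finset.sum_range_succ]
    have hz : ∑ j ∈ Finset.range i.val, g j = 0 := by
      refine Finset.sum_eq_zero fun j hj => ?_
      rw [Finset.mem_range] at hj
      simp [hg, if_neg (by omega : ¬ i.val < j), if_neg (by omega : ¬ j = i.val)]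
    have hgi : g i.val = κt * (((1 - α) * κt + α * (α * (κt - 1) / κt) ^ (N - i.val)) / D) := by
      simp [hg]
    rw [hz, hgi, zero_add, Finset.sum_Ico_eq_sum_range]
    have hk : N + 1 - (i.val + 1) = N - i.val := by omega
    rw [hk]
    set k := N - i.val with hkdef
    have hterm : ∀ m ∈ Finset.range k,
        g (i.val + 1 + m)
          = α ^ (m + 1) * (((1 - α) * κt + α * (α * (κt - 1) / κt) ^ (k - (m + 1))) / D) := by
      intro m hm
      rw [Finset.mem_range] at hm
      have h1' : i.val + 1 + m - i.val = m + 1 := by omega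
      have h2' : N - (i.val + 1 + m) = k - (m + 1) := by omega
      simp [hg, if_pos (by omega : i.val < i.val + 1 + m), h1', h2']
    have hsum : ∑ m ∈ Finset.range k,
            α ^ (m + 1) * (((1 - α) * κt + α * (α * (κt - 1) / κt) ^ (k - (m + 1))) / D)
        = (∑ m ∈ Finset.range k,
            α ^ (m + 1) * ((1 - α) * κt + α * (α * (κt - 1) / κt) ^ (k - (m + 1)))) / D := by
      rw [Finset.sum_div]
      exact Finset.sum_congr rfl fun m _ => (mul_div_assoc _ _ _).symm
    rw [Finset.sum_congr rfl hterm, hsum,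
      (mul_div_assoc κt ((1 - α) * κt + α * (α * (κt - 1) / κt) ^ k) D).symm,
      ← add_div, key_sum α κt hκ k, ← hD, div_self hDne]
  have hut : A.BlockTriangular id := by
    intro p q hpq
    rw [hAe]
    have h1 : ¬ (p:ℕ) < (q:ℕ) := by exact not_lt_of_gt hpq
    have h2 : p ≠ q := ne_of_gt hpq
    simp [h1, h2]
  have hdet : A.det = κt ^ (N + 1) := by
    rw [Matrix.det_of_upperTriangular hut]
    have : ∀ p : Fin (N + 1), A p p = κt := fun p => by simp [hAe]
    simp [this]
  have hu : IsUnit A.det := by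
    rw [hdet]
    exact isUnit_iff_ne_zero.mpr (pow_ne_zero _ hκ)
  have hom : omN N ρ T θ = w := by
    show A⁻¹.mulVec 1 = w
    rw [← hmv, Matrix.mulVec_mulVec, Matrix.nonsing_inv_mul A hu, Matrix.one_mulVec]
  refine ⟨fun i => by rw [hom], ?_⟩
  rw [hom]
  show ((1 - α) * κt + α * (α * (κt - 1) / κt) ^ (N - (Fin.last N).val)) / D = 1 / κt
  have hXne : κt - α * (κt - 1) ≠ 0 := ne_of_gt hDpos
  rw [Fin.val_last, Nat.sub_self, pow_zero, mul_one, hD,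
    show (1 - α) * κt + α = κt - α * (κt - 1) by ring,
    div_eq_div_iff (mul_ne_zero hκ hXne) hκ]
  ring
end
end

section
/- Let n ≥ 2 be an integer, ρ > 0, T > 0, θ ≥ 0, N ≥ 2, and use the equidistant grid t_k = kT/N; set α := e^{−ρT/N} and κ := 2θ + (n−1)/2. Then δ_{N+1} = det B ≠ 0 and the vector ν := (Γ^θ + (n−1)Γ̃)^{−1}1 has components ν_1 = ((1−α)/δ_{N+1})·( φ_2 + (1−α)·Σ_{j=2}^{N} (ακ)^{j−1} φ_{j+1} + (ακ)^N ), ν_{N+1} = ((1−α)/δ_{N+1})·( (α(κ+1−n))^N + (1−α)·Σ_{j=2}^{N} (α(κ+1−n))^{N+1−j} δ_{j−1} + δ_N ), and for 2 ≤ i ≤ N, ν_i = ((1−α)/δ_{N+1})·( (α(κ+1−n))^{i−1} φ_{i+1} + (1−α)·Σ_{j=2}^{i−1} (α(κ+1−n))^{i−j} δ_{j−1} φ_{i+1} + (1−α)·Σ_{j=i}^{N} (ακ)^{j−i} δ_{i−1} φ_{j+1} + (ακ)^{N+1−i} δ_{i−1} ). -/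
open Matrix Finset

noncomputable section

/-- `ν := (Γ^θ + (n−1)Γ̃)^{−1} 1` on the equidistant grid. -/
def nuN (n N : ℕ) (ρ T θ : ℝ) : Fin (N + 1) → ℝ :=
  (Gam ρ θ (egrid T N) + ((n : ℝ) - 1) • GamT ρ (egrid T N))⁻¹.mulVec 1

/-- Entries of the tridiagonal matrix `B` (`0`-based indices; paper index = Lean index + 1). -/
def Bf (N n : ℕ) (κ α : ℝ) (i j : ℕ) : ℝ :=
  if i = j then
    (if i = 0 then 1 - (n : ℝ) * α ^ 2 + κ
     else if i = N then 1 - α ^ 2 + κ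
     else 1 + α ^ 2 * (κ - (n : ℝ)) + κ)
  else if j = i + 1 then -(α * κ)
  else if i = j + 1 then -(α * (κ + 1 - (n : ℝ)))
  else 0

/-- The upward recursion `ψ_l = φ_{N+2−l}` generating the sequence `φ`. -/
def psiSeq (n : ℕ) (κ α : ℝ) : ℕ → ℝ
  | 0 => 1
  | 1 => 1 - α ^ 2 + κ
  | l + 2 => (1 + α ^ 2 * (κ - (n : ℝ)) + κ) * psiSeq n κ α (l + 1)
      - α ^ 2 * κ * (κ + 1 - (n : ℝ)) * psiSeq n κ α l

def Lf (N : ℕ) (α : ℝ) (i k : ℕ) : ℝ :=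
  if i = k then (if i = 0 then 1 else if i = N then 1 else 1 + α^2)
  else if k = i + 1 then -α else if i = k + 1 then -α else 0

def toep (n : ℕ) (κ α : ℝ) (i j : ℕ) : ℝ :=
  if i = j then 1 + κ else if j < i then (n : ℝ) * α^(i-j) else α^(j-i)

lemma fin_sum_tri0 {N : ℕ} (hN : 1 ≤ N) (F : ℕ → ℝ) (hF : ∀ k, 1 < k → F k = 0) :
    ∑ k : Fin (N+1), F k.val = F 0 + F 1 := by
  rw [Fin.sum_univ_eq_sum_range]
  rw [← Finset.sum_subset (show Finset.Icc 0 1 ⊆ Finset.range (N+1) by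
    intro x hx; simp only [Finset.mem_Icc] at hx; simp only [Finset.mem_range]; omega)
    (by intro x hx hx2; simp only [Finset.mem_Icc] at hx2; exact hF x (by omega))]
  rw [Finset.sum_Icc_succ_top (by omega), Finset.Icc_self, Finset.sum_singleton]

lemma fin_sum_triN {N : ℕ} (hN : 1 ≤ N) (F : ℕ → ℝ) (hF : ∀ k, k < N - 1 → F k = 0) :
    ∑ k : Fin (N+1), F k.val = F (N-1) + F N := by
  rw [Fin.sum_univ_eq_sum_range]
  rw [← Finset.sum_subset (show Finset.Icc (N-1) N ⊆ Finset.range (N+1) by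
    intro x hx; simp only [Finset.mem_Icc] at hx; simp only [Finset.mem_range]; omega)
    (by intro x hx hx2; simp only [Finset.mem_Icc, Finset.mem_range] at *; exact hF x (by omega))]
  rw [show Finset.Icc (N-1) N = Finset.Icc (N-1) ((N-1)+1) by rw [Nat.sub_add_cancel hN]]
  rw [Finset.sum_Icc_succ_top (by omega), Finset.Icc_self, Finset.sum_singleton,
    Nat.sub_add_cancel hN]

lemma fin_sum_mid {N i : ℕ} (h1 : 1 ≤ i) (h2 : i + 1 ≤ N) (F : ℕ → ℝ)
    (hF : ∀ k, k < i - 1 ∨ i + 1 < k → F k = 0) :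
    ∑ k : Fin (N+1), F k.val = F (i-1) + F i + F (i+1) := by
  rw [Fin.sum_univ_eq_sum_range]
  rw [← Finset.sum_subset (show Finset.Icc (i-1) (i+1) ⊆ Finset.range (N+1) by
    intro x hx; simp only [Finset.mem_Icc] at hx; simp only [Finset.mem_range]; omega)
    (by intro x hx hx2; simp only [Finset.mem_Icc, Finset.mem_range] at *; exact hF x (by omega))]
  rw [show Finset.Icc (i-1) (i+1) = Finset.Icc (i-1) ((i-1)+1+1) by rw [Nat.sub_add_cancel h1]]
  rw [Finset.sum_Icc_succ_top (by omega), Finset.sum_Icc_succ_top (by omega),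
    Finset.Icc_self, Finset.sum_singleton, Nat.sub_add_cancel h1]

lemma Lf_far {N : ℕ} {α : ℝ} {i k : ℕ} (h : k + 1 < i ∨ i + 1 < k) : Lf N α i k = 0 := by
  unfold Lf; rw [if_neg (by omega), if_neg (by omega), if_neg (by omega)]

lemma Lf_diag0 {N : ℕ} {α : ℝ} : Lf N α 0 0 = 1 := by unfold Lf; simp

lemma Lf_diagN {N : ℕ} {α : ℝ} (h : 0 < N) : Lf N α N N = 1 := by
  unfold Lf; rw [if_pos rfl, if_neg (by omega), if_pos rfl]

lemma Lf_diag_mid {N : ℕ} {α : ℝ} {i : ℕ} (h1 : 1 ≤ i) (h2 : i < N) : Lf N α i i = 1 + α^2 := by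
  unfold Lf; rw [if_pos rfl, if_neg (by omega), if_neg (by omega)]

lemma Lf_sub {N : ℕ} {α : ℝ} {i k : ℕ} (h : i = k + 1) : Lf N α i k = -α := by
  unfold Lf; rw [if_neg (by omega), if_neg (by omega), if_pos h]

lemma Lf_super {N : ℕ} {α : ℝ} {i k : ℕ} (h : k = i + 1) : Lf N α i k = -α := by
  unfold Lf; rw [if_neg (by omega), if_pos h]

lemma toep_diag {n : ℕ} {κ α : ℝ} {i : ℕ} : toep n κ α i i = 1 + κ := by
  unfold toep; rw [if_pos rfl]

lemma toep_lt {n : ℕ} {κ α : ℝ} {i j : ℕ} (h : j < i) : toep n κ α i j = n * α^(i-j) := by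
  unfold toep; rw [if_neg (by omega), if_pos h]

lemma toep_gt {n : ℕ} {κ α : ℝ} {i j : ℕ} (h : i < j) : toep n κ α i j = α^(j-i) := by
  unfold toep; rw [if_neg (by omega), if_neg (by omega)]

lemma Bf_diag0 {N n : ℕ} {κ α : ℝ} : Bf N n κ α 0 0 = 1 - (n:ℝ)*α^2 + κ := by
  unfold Bf; rw [if_pos rfl, if_pos rfl]

lemma Bf_diagN {N n : ℕ} {κ α : ℝ} (h : 0 < N) : Bf N n κ α N N = 1 - α^2 + κ := by
  unfold Bf; rw [if_pos rfl, if_neg (by omega), if_pos rfl]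

lemma Bf_diag_mid {N n : ℕ} {κ α : ℝ} {i : ℕ} (h1 : 1 ≤ i) (h2 : i < N) :
    Bf N n κ α i i = 1 + α^2*(κ - (n:ℝ)) + κ := by
  unfold Bf; rw [if_pos rfl, if_neg (by omega), if_neg (by omega)]

lemma Bf_super {N n : ℕ} {κ α : ℝ} {i j : ℕ} (h : j = i + 1) : Bf N n κ α i j = -(α*κ) := by
  unfold Bf; rw [if_neg (by omega), if_pos h]

lemma Bf_sub {N n : ℕ} {κ α : ℝ} {i j : ℕ} (h : i = j + 1) :
    Bf N n κ α i j = -(α*(κ + 1 - (n:ℝ))) := by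
  unfold Bf; rw [if_neg (by omega), if_neg (by omega), if_pos h]

lemma Bf_far {N n : ℕ} {κ α : ℝ} {i j : ℕ} (h : j + 1 < i ∨ i + 1 < j) : Bf N n κ α i j = 0 := by
  unfold Bf; rw [if_neg (by omega), if_neg (by omega), if_neg (by omega)]

lemma LA_entry (N n : ℕ) (κ α : ℝ) (hN : 2 ≤ N) (i j : ℕ) (hi : i ≤ N) (hj : j ≤ N) :
    ∑ k : Fin (N+1), Lf N α i k.val * toep n κ α k.val j = Bf N n κ α i j := by
  by_cases hi0 : i = 0
  · subst hi0
    rw [fin_sum_tri0 (N:=N) (by omega) (fun k => Lf N α 0 k * toep n κ α k j)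
      (fun k hk => by show Lf N α 0 k * toep n κ α k j = 0; rw [Lf_far (by omega), zero_mul])]
    show Lf N α 0 0 * toep n κ α 0 j + Lf N α 0 1 * toep n κ α 1 j = _
    rw [Lf_diag0, Lf_super rfl]
    rcases Nat.lt_trichotomy j 1 with hj1 | hj1 | hj1
    · have hj0 : j = 0 := by omega
      subst hj0
      rw [toep_diag, toep_lt (by omega), Bf_diag0]
      norm_num; ring
    · subst hj1
      rw [toep_gt (by omega), toep_diag, Bf_super rfl]
      norm_num; ring
    · obtain ⟨d, rfl⟩ : ∃ d, j = d + 2 := ⟨j - 2, by omega⟩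
      rw [toep_gt (by omega), toep_gt (by omega), Bf_far (by omega)]
      rw [show d + 2 - 0 = (d+1)+1 by omega, show d + 2 - 1 = d+1 by omega, pow_succ]
      ring
  · by_cases hiN : i = N
    · subst hiN
      rw [fin_sum_triN (N:=i) (by omega) (fun k => Lf i α i k * toep n κ α k j)
        (fun k hk => by show Lf i α i k * toep n κ α k j = 0; rw [Lf_far (by omega), zero_mul])]
      show Lf i α i (i-1) * toep n κ α (i-1) j + Lf i α i i * toep n κ α i j = _
      rw [Lf_sub (by omega), Lf_diagN (by omega)]
      rcases Nat.lt_trichotomy j (i-1) with hj1 | hj1 | hj1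
      · obtain ⟨d, hd⟩ : ∃ d, i = j + d + 2 := ⟨i - j - 2, by omega⟩
        rw [toep_lt (by omega), toep_lt (by omega), Bf_far (by omega)]
        rw [show i - 1 - j = d + 1 by omega, show i - j = (d+1)+1 by omega, pow_succ]
        ring
      · subst hj1
        rw [toep_diag, toep_lt (by omega), Bf_sub (by omega)]
        rw [show i - (i-1) = 1 by omega, pow_one]
        ring
      · have hjN : j = i := by omega
        subst hjN
        rw [toep_gt (by omega), toep_diag, Bf_diagN (by omega)]
        rw [show j - (j-1) = 1 by omega, pow_one]
        ring
    · rw [fin_sum_mid (N:=N) (i:=i) (by omega) (by omega)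
        (fun k => Lf N α i k * toep n κ α k j)
        (fun k hk => by show Lf N α i k * toep n κ α k j = 0; rw [Lf_far (by omega), zero_mul])]
      show Lf N α i (i-1) * toep n κ α (i-1) j + Lf N α i i * toep n κ α i j
        + Lf N α i (i+1) * toep n κ α (i+1) j = _
      rw [Lf_sub (by omega), Lf_diag_mid (by omega) (by omega), Lf_super rfl]
      rcases Nat.lt_trichotomy j i with hj1 | hj1 | hj1
      · rcases Nat.lt_trichotomy j (i-1) with hj2 | hj2 | hj2
        · obtain ⟨d, hd⟩ : ∃ d, i = j + d + 2 := ⟨i - j - 2, by omega⟩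
          rw [toep_lt (by omega), toep_lt (by omega), toep_lt (by omega), Bf_far (by omega)]
          rw [show i - 1 - j = d + 1 by omega, show i - j = (d+1)+1 by omega,
            show i + 1 - j = (d+1)+1+1 by omega, pow_succ, pow_succ]
          ring
        · subst hj2
          rw [toep_diag, toep_lt (by omega), toep_lt (by omega), Bf_sub (by omega)]
          rw [show i - (i-1) = 1 by omega, show i + 1 - (i-1) = 1+1 by omega, pow_one, pow_succ,
            pow_one]
          ring
        · omega
      · subst hj1
        rw [toep_gt (by omega), toep_diag, toep_lt (by omega),
          Bf_diag_mid (by omega) (by omega)]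
        rw [show j - (j-1) = 1 by omega, show j + 1 - j = 1 by omega, pow_one]
        ring
      · rcases Nat.lt_trichotomy j (i+1) with hj2 | hj2 | hj2
        · omega
        · subst hj2
          rw [toep_gt (by omega), toep_gt (by omega), toep_diag, Bf_super rfl]
          rw [show i + 1 - (i-1) = 1+1 by omega, show i + 1 - i = 1 by omega, pow_one, pow_succ,
            pow_one]
          ring
        · obtain ⟨d, hd⟩ : ∃ d, j = i + d + 2 := ⟨j - i - 2, by omega⟩
          rw [toep_gt (by omega), toep_gt (by omega), toep_gt (by omega), Bf_far (by omega)]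
          rw [show j - (i-1) = (d+1)+1+1 by omega, show j - i = (d+1)+1 by omega,
            show j - (i+1) = d + 1 by omega, pow_succ, pow_succ]
          ring

def Cf (α : ℝ) (i j : ℕ) : ℝ :=
  if j = 0 then α^i else if j ≤ i then Real.sqrt (1-α^2) * α^(i-j) else 0

lemma CC_entry (N : ℕ) (α : ℝ) (h0 : 0 < α) (h1 : α < 1) (i j : ℕ) (hj : j ≤ i) (hi : i ≤ N) :
    ∑ k : Fin (N+1), Cf α i k.val * Cf α j k.val = α^(i-j) := by
  have hs : (0:ℝ) ≤ 1 - α^2 := by nlinarith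
  rw [Fin.sum_univ_eq_sum_range (fun k => Cf α i k * Cf α j k) (N+1)]
  rw [← Finset.sum_subset (show Finset.range (j+1) ⊆ Finset.range (N+1) by
      apply Finset.range_subset_range.2; omega)
    (by
      intro x hx hx2
      simp only [Finset.mem_range] at hx hx2
      show Cf α i x * Cf α j x = 0
      have : Cf α j x = 0 := by unfold Cf; rw [if_neg (by omega), if_neg (by omega)]
      rw [this, mul_zero])]
  rw [Finset.sum_range_succ']
  have hterm : ∀ k ∈ Finset.range j, (fun k => Cf α i k * Cf α j k) (k+1)
      = (1-α^2) * (α^(i-j) * (α^2)^(j-1-k)) := by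
    intro k hk
    simp only [Finset.mem_range] at hk
    show Cf α i (k+1) * Cf α j (k+1) = _
    unfold Cf
    rw [if_neg (by omega), if_pos (by omega), if_neg (by omega), if_pos (by omega)]
    rw [mul_mul_mul_comm, Real.mul_self_sqrt hs]
    congr 1
    rw [← pow_add, ← pow_mul, ← pow_add]
    congr 1
    omega
  rw [Finset.sum_congr rfl hterm]
  have hf0 : Cf α i 0 * Cf α j 0 = α^i * α^j := by
    unfold Cf; simp
  rw [hf0]
  simp only [← Finset.mul_sum]
  rw [show ∑ k ∈ Finset.range j, (α^2)^(j-1-k) = ∑ k ∈ Finset.range j, (α^2)^k from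
    Finset.sum_range_reflect (fun k => (α^2)^k) j]
  have hg : (∑ k ∈ Finset.range j, (α^2)^k) * (α^2 - 1) = (α^2)^j - 1 := geom_sum_mul _ _
  have hij : α^i * α^j = α^(i-j) * (α^2)^j := by
    rw [← pow_mul, ← pow_add, ← pow_add]; congr 1; omega
  linear_combination (-(α^(i-j))) * hg + hij

lemma G0_pd (N : ℕ) (α : ℝ) (h0 : 0 < α) (h1 : α < 1) (x : Fin (N+1) → ℝ) (hx : x ≠ 0) :
    0 < x ⬝ᵥ (Matrix.of fun i j : Fin (N+1) => toep 1 0 α i.val j.val).mulVec x := by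
  set C : Matrix (Fin (N+1)) (Fin (N+1)) ℝ := Matrix.of fun i j => Cf α i.val j.val with hC
  have hCC : (Matrix.of fun i j : Fin (N+1) => toep 1 0 α i.val j.val) = C * Cᵀ := by
    ext i j
    rw [Matrix.mul_apply]
    simp only [hC, Matrix.of_apply, Matrix.transpose_apply]
    rcases le_or_gt j.val i.val with hle | hlt
    · rw [CC_entry N α h0 h1 i.val j.val hle (by omega)]
      unfold toep
      rcases Nat.lt_or_ge j.val i.val with h | h
      · rw [if_neg (by omega), if_pos h]; norm_num
      · have : i.val = j.val := by omega
        rw [if_pos this, this]; simp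
    · rw [Finset.sum_congr rfl (fun k _ => mul_comm (Cf α i.val k.val) (Cf α j.val k.val))]
      rw [CC_entry N α h0 h1 j.val i.val (by omega) (by omega)]
      unfold toep
      rw [if_neg (by omega), if_neg (by omega)]
  have hs : (0:ℝ) < 1 - α^2 := by nlinarith
  have hdetC : C.det ≠ 0 := by
    rw [Matrix.det_of_lowerTriangular C (by
      intro i j hij
      have : i.val < j.val := hij
      simp only [hC, Matrix.of_apply]
      unfold Cf
      rw [if_neg (by omega), if_neg (by omega)])]
    apply Finset.prod_ne_zero_iff.2
    intro i _
    simp only [hC, Matrix.of_apply]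
    unfold Cf
    by_cases h : i.val = 0
    · rw [if_pos h]; positivity
    · rw [if_neg h, if_pos (le_refl _)]
      have : Real.sqrt (1-α^2) > 0 := Real.sqrt_pos.2 hs
      positivity
  set z := Cᵀ.mulVec x with hz
  have hzne : z ≠ 0 := by
    intro h
    have : Cᵀ.det = 0 := Matrix.exists_mulVec_eq_zero_iff.1 ⟨x, hx, h⟩
    rw [Matrix.det_transpose] at this
    exact hdetC this
  have hq : x ⬝ᵥ (C * Cᵀ).mulVec x = z ⬝ᵥ z := by
    rw [← Matrix.mulVec_mulVec, Matrix.dotProduct_mulVec, hz, Matrix.mulVec_transpose]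
  rw [hCC, hq]
  obtain ⟨i, hi⟩ : ∃ i, z i ≠ 0 := Function.ne_iff.1 hzne
  have : ∀ k ∈ Finset.univ, (0:ℝ) ≤ z k * z k := fun k _ => mul_self_nonneg _
  exact Finset.sum_pos' this ⟨i, Finset.mem_univ i, mul_self_pos.2 hi⟩

lemma det_tri_succ (f : ℕ → ℕ → ℝ) (hf : ∀ i j, j + 1 < i ∨ i + 1 < j → f i j = 0) (k : ℕ) :
    (Matrix.of fun i j : Fin (k+2) => f i.val j.val).det
      = f (k+1) (k+1) * (Matrix.of fun i j : Fin (k+1) => f i.val j.val).det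
        - f (k+1) k * f k (k+1) * (Matrix.of fun i j : Fin k => f i.val j.val).det := by
  set A : Matrix (Fin (k+2)) (Fin (k+2)) ℝ := Matrix.of fun i j => f i.val j.val with hA
  rw [Matrix.det_succ_row A (Fin.last (k+1))]
  rw [Fin.sum_univ_castSucc, Fin.sum_univ_castSucc]
  have hz : ∀ j : Fin k,
      (-1:ℝ)^((Fin.last (k+1) : ℕ) + ((j.castSucc.castSucc : Fin (k+2)) : ℕ))
        * A (Fin.last (k+1)) j.castSucc.castSucc
        * (A.submatrix (Fin.last (k+1)).succAbove j.castSucc.castSucc.succAbove).det = 0 := by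
    intro j
    have : A (Fin.last (k+1)) j.castSucc.castSucc = 0 := by
      show f (k+1) j.val = 0
      exact hf _ _ (Or.inl (by omega))
    rw [this, mul_zero, zero_mul]
  rw [Finset.sum_congr rfl (fun j _ => hz j), Finset.sum_const, smul_zero]
  have hsa : ∀ (m : ℕ) (p : Fin (m+1)) (x : Fin m),
      ((p.succAbove x : Fin (m+1)) : ℕ) = if x.val < p.val then x.val else x.val + 1 := by
    intro m p x
    rw [Fin.succAbove]
    split_ifs with h h2 h2 <;> simp_all [Fin.lt_def]
  have hsub2 : (A.submatrix (Fin.last (k+1)).succAbove (Fin.last (k+1)).succAbove)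
      = Matrix.of (fun i j : Fin (k+1) => f i.val j.val) := by
    ext i j
    simp only [Matrix.submatrix_apply, hA, Matrix.of_apply]
    congr 1 <;> rw [hsa] <;> simp [Fin.val_last] <;> omega
  have hentry2 : A (Fin.last (k+1)) (Fin.last (k+1)) = f (k+1) (k+1) := by
    simp [hA, Fin.val_last]
  have hsign2 : (-1:ℝ)^((Fin.last (k+1) : ℕ) + ((Fin.last (k+1)) : ℕ)) = 1 := by
    rw [Fin.val_last]
    exact Even.neg_one_pow ⟨k+1, by ring⟩
  have hentry1 : A (Fin.last (k+1)) (Fin.last k).castSucc = f (k+1) k := by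
    simp [hA, Fin.val_last]
  have hsign1 : (-1:ℝ)^((Fin.last (k+1) : ℕ) + (((Fin.last k).castSucc : Fin (k+2)) : ℕ)) = -1 := by
    simp only [Fin.val_last, Fin.coe_castSucc]
    exact Odd.neg_one_pow ⟨k, by ring⟩
  have hM1 : (A.submatrix (Fin.last (k+1)).succAbove ((Fin.last k).castSucc).succAbove).det
      = f k (k+1) * (Matrix.of (fun i j : Fin k => f i.val j.val)).det := by
    set M1 := A.submatrix (Fin.last (k+1)).succAbove ((Fin.last k).castSucc).succAbove with hM
    have hcol : ∀ i : Fin (k+1), M1 i (Fin.last k) = f i.val (k+1) := by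
      intro i
      simp only [hM, Matrix.submatrix_apply, hA, Matrix.of_apply]
      congr 1 <;> rw [hsa] <;> simp [Fin.val_last] <;> exact Fin.is_le i
    rw [Matrix.det_succ_column M1 (Fin.last k), Fin.sum_univ_castSucc]
    have hz1 : ∀ i : Fin k,
        (-1:ℝ)^(((i.castSucc : Fin (k+1)) : ℕ) + ((Fin.last k : Fin (k+1)) : ℕ))
          * M1 i.castSucc (Fin.last k)
          * (M1.submatrix i.castSucc.succAbove (Fin.last k).succAbove).det = 0 := by
      intro i
      rw [hcol]
      rw [hf _ _ (Or.inr (by have := i.isLt; simp only [Fin.coe_castSucc]; omega))]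
      ring
    rw [Finset.sum_congr rfl (fun i _ => hz1 i), Finset.sum_const, smul_zero, zero_add]
    rw [hcol]
    have hsign : (-1:ℝ)^(((Fin.last k : Fin (k+1)) : ℕ) + ((Fin.last k : Fin (k+1)) : ℕ)) = 1 := by
      rw [Fin.val_last]
      exact Even.neg_one_pow ⟨k, by ring⟩
    rw [hsign, Fin.val_last]
    have hmin : (M1.submatrix (Fin.last k).succAbove (Fin.last k).succAbove)
        = Matrix.of (fun i j : Fin k => f i.val j.val) := by
      ext i j
      simp only [hM, Matrix.submatrix_apply, hA, Matrix.of_apply]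
      congr 1 <;> rw [hsa, hsa] <;> simp [Fin.val_last, Fin.coe_castSucc] <;> omega
    rw [hmin]
    ring
  rw [hsub2, hentry2, hsign2, hentry1, hsign1, hM1]
  ring

def wseq (N : ℕ) (α b c : ℝ) (dlt phi : ℕ → ℝ) (p : ℕ) : ℝ :=
  c^(p-1) * phi (p+1)
  + (1-α) * ∑ j ∈ Finset.Icc 2 (p-1), c^(p-j) * dlt (j-1) * phi (p+1)
  + (1-α) * ∑ j ∈ Finset.Icc (max p 2) N, b^(j-p) * dlt (p-1) * phi (j+1)
  + b^(N+1-p) * dlt (p-1)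

lemma tri_solve (N : ℕ) (hN : 2 ≤ N) (α a b c : ℝ) (dlt phi : ℕ → ℝ)
    (hd0 : dlt 0 = 1)
    (hd1 : dlt 1 = a - α*b)
    (hdrec : ∀ k, 1 ≤ k → k ≤ N-1 → dlt (k+1) = a * dlt k - b*c*dlt (k-1))
    (hdN1 : dlt (N+1) = (a - α*c) * dlt N - b*c*dlt (N-1))
    (hpN2 : phi (N+2) = 1)
    (hpN1 : phi (N+1) = a - α*c)
    (hprec : ∀ k, 2 ≤ k → k ≤ N → phi k = a * phi (k+1) - b*c*phi (k+2)) :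
    ((a - α*b) * wseq N α b c dlt phi 1 - b * wseq N α b c dlt phi 2 = dlt (N+1))
    ∧ (∀ i, 2 ≤ i → i ≤ N → -(c * wseq N α b c dlt phi (i-1)) + a * wseq N α b c dlt phi i
        - b * wseq N α b c dlt phi (i+1) = (1-α) * dlt (N+1))
    ∧ (-(c * wseq N α b c dlt phi N) + (a - α*c) * wseq N α b c dlt phi (N+1) = dlt (N+1)) := by
  set P : ℕ → ℝ := fun p => ∑ j ∈ Finset.Icc 2 (p-1), c^(p-j) * dlt (j-1) with hP
  set Q : ℕ → ℝ := fun p => ∑ j ∈ Finset.Icc p N, b^(j-p) * phi (j+1) with hQ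
  have hP2 : P 2 = 0 := by simp [hP]
  have hPs : ∀ p, 2 ≤ p → P (p+1) = c * P p + c * dlt (p-1) := by
    intro p hp
    show ∑ j ∈ Finset.Icc 2 (p+1-1), c^(p+1-j) * dlt (j-1) = _
    rw [show p+1-1 = p from rfl,
      show Finset.Icc 2 p = Finset.Icc 2 ((p-1)+1) by rw [Nat.sub_add_cancel (by omega)],
      Finset.sum_Icc_succ_top (by omega), Nat.sub_add_cancel (by omega)]
    rw [show p+1-p = 1 by omega, pow_one]
    have : ∀ j ∈ Finset.Icc 2 (p-1), c^(p+1-j) * dlt (j-1) = c * (c^(p-j) * dlt (j-1)) := by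
      intro j hj
      simp only [Finset.mem_Icc] at hj
      rw [show p+1-j = (p-j)+1 by omega, pow_succ]
      ring
    rw [Finset.sum_congr rfl this, ← Finset.mul_sum, hP]
  have hQN1 : Q (N+1) = 0 := by simp [hQ]
  have hQs : ∀ p, p ≤ N → Q p = phi (p+1) + b * Q (p+1) := by
    intro p hp
    show ∑ j ∈ Finset.Icc p N, b^(j-p) * phi (j+1) = _
    rw [show Finset.Icc p N = insert p (Finset.Icc (p+1) N) by
        ext x; simp only [Finset.mem_insert, Finset.mem_Icc]; omega,
      Finset.sum_insert (by simp only [Finset.mem_Icc]; omega)]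
    rw [Nat.sub_self, pow_zero, one_mul]
    congr 1
    have : ∀ j ∈ Finset.Icc (p+1) N, b^(j-p) * phi (j+1) = b * (b^(j-(p+1)) * phi (j+1)) := by
      intro j hj
      simp only [Finset.mem_Icc] at hj
      rw [show j-p = (j-(p+1))+1 by omega, pow_succ]
      ring
    rw [Finset.sum_congr rfl this, ← Finset.mul_sum, hQ]
  have hw : ∀ p, 2 ≤ p → wseq N α b c dlt phi p
      = c^(p-1) * phi (p+1) + (1-α) * (P p * phi (p+1)) + (1-α) * (dlt (p-1) * Q p)
        + b^(N+1-p) * dlt (p-1) := by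
    intro p hp
    have e1 : ∑ j ∈ Finset.Icc 2 (p-1), c^(p-j) * dlt (j-1) * phi (p+1)
        = P p * phi (p+1) := by
      show _ = (∑ j ∈ Finset.Icc 2 (p-1), c^(p-j) * dlt (j-1)) * phi (p+1)
      rw [Finset.sum_mul]
    have e2 : ∑ j ∈ Finset.Icc p N, b^(j-p) * dlt (p-1) * phi (j+1)
        = dlt (p-1) * Q p := by
      show _ = dlt (p-1) * ∑ j ∈ Finset.Icc p N, b^(j-p) * phi (j+1)
      rw [Finset.mul_sum]
      exact Finset.sum_congr rfl fun j _ => by ring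
    unfold wseq
    rw [max_eq_left hp, e1, e2]
  have hw1 : wseq N α b c dlt phi 1 = phi 2 + (1-α) * (dlt 0 * (b * Q 2)) + b^N * dlt 0 := by
    have e3 : ∑ j ∈ Finset.Icc 2 N, b^(j-1) * dlt 0 * phi (j+1) = dlt 0 * (b * Q 2) := by
      show _ = dlt 0 * (b * ∑ j ∈ Finset.Icc 2 N, b^(j-2) * phi (j+1))
      rw [Finset.mul_sum, Finset.mul_sum]
      apply Finset.sum_congr rfl
      intro j hj
      simp only [Finset.mem_Icc] at hj
      rw [show j-1 = (j-2)+1 by omega, pow_succ]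
      ring
    unfold wseq
    rw [show (1:ℕ)-1 = 0 from rfl, pow_zero, one_mul, show max 1 2 = 2 from rfl,
      show Finset.Icc 2 0 = ∅ from rfl, Finset.sum_empty, mul_zero, add_zero,
      show N+1-1 = N from rfl, e3]
  have hsplit : ∀ i, 1 ≤ i → i ≤ N →
      dlt i * phi (i+1) - b*c*dlt (i-1)*phi (i+2) = dlt (N+1) := by
    have key : ∀ m, m ≤ N - 1 →
        dlt (N-m) * phi (N-m+1) - b*c*dlt (N-m-1)*phi (N-m+2) = dlt (N+1) := by
      intro m
      induction m with
      | zero =>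
        intro _
        simp only [Nat.sub_zero]
        rw [hpN1, hpN2, hdN1]
        ring
      | succ m ih =>
        intro hm
        have ihm := ih (by omega)
        rw [show N - m = (N-(m+1))+1 by omega] at ihm
        set i := N - (m+1) with hi
        have hp := hprec (i+1) (by omega) (by omega)
        have hd := hdrec i (by omega) (by omega)
        rw [show i+1-1 = i from rfl] at ihm
        linear_combination ihm + dlt i * hp - phi (i+2) * hd
    intro i h1 h2
    have := key (N - i) (by omega)
    rw [show N - (N-i) = i by omega] at this
    exact this
  refine ⟨?_, ?_, ?_⟩
  · -- I1
    rw [hw1, hw 2 (le_refl 2)]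
    rw [show (2:ℕ)-1 = 1 from rfl, pow_one, hP2]
    have hs1 := hsplit 1 (by omega) (by omega)
    rw [show (1:ℕ)-1 = 0 from rfl] at hs1
    rw [hd0, hd1] at hs1 ⊢
    rw [show b^N = b^(N-1)*b by rw [← pow_succ]; congr 1; omega,
      show N+1-2 = N-1 by omega]
    linear_combination hs1
  · -- I2
    intro i h2i hiN
    by_cases hi2 : i = 2
    · subst hi2
      rw [hw1, hw 2 (le_refl 2), hw 3 (by omega)]
      rw [show (2:ℕ)-1 = 1 from rfl, show (3:ℕ)-1 = 2 from rfl, pow_one, hP2]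
      have eP3 : P 3 = c * dlt 1 := by
        have := hPs 2 (le_refl 2)
        rw [hP2] at this
        rw [show (3:ℕ) = 2+1 from rfl, this, show (2:ℕ)-1 = 1 from rfl]
        ring
      rw [eP3]
      have eQ2 : Q 2 = phi 3 + b * Q 3 := hQs 2 hiN
      rw [eQ2]
      have hf2 := hprec 2 (le_refl 2) hiN
      have hd2 := hdrec 1 (le_refl 1) (by omega)
      have hs2 := hsplit 2 (by omega) hiN
      rw [show (2:ℕ)-1 = 1 from rfl] at hs2
      rw [show b^N = b^(N-2)*b*b by rw [← pow_succ, ← pow_succ]; congr 1; omega,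
        show b^(N+1-2) = b^(N-2)*b by rw [← pow_succ]; congr 1; omega,
        show N+1-3 = N-2 by omega]
      linear_combination (-c) * hf2 + (-(b*((1-α)*Q 3 + b^(N-2))) - (1-α)*phi 3) * hd2 + (1-α) * hs2
    · -- generic 3 ≤ i ≤ N
      have h3i : 3 ≤ i := by omega
      rw [hw (i-1) (by omega), hw i (by omega), hw (i+1) (by omega)]
      rw [show i-1-1 = i-2 from rfl, show i-1+1 = i by omega, show N+1-(i-1) = N+2-i by omega,
        Nat.add_sub_cancel, show i+1+1 = i+2 from rfl, show N+1-(i+1) = N-i by omega]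
      have eP2 : P (i+1) = c * P i + c * dlt (i-1) := hPs i (by omega)
      have eP1 : P i = c * P (i-1) + c * dlt (i-2) := by
        have := hPs (i-1) (by omega)
        rw [show i-1+1 = i by omega, show i-1-1 = i-2 from rfl] at this
        exact this
      rw [eP2, eP1]
      have eQ2 : Q i = phi (i+1) + b * Q (i+1) := hQs i hiN
      have eQ1 : Q (i-1) = phi i + b * Q i := by
        have := hQs (i-1) (by omega)
        rw [show i-1+1 = i by omega] at this
        exact this
      rw [eQ1, eQ2]
      have hf := hprec i h2i hiN
      have hd : dlt i = a * dlt (i-1) - b*c*dlt (i-2) := by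
        have := hdrec (i-1) (by omega) (by omega)
        rw [show i-1+1 = i by omega, show i-1-1 = i-2 from rfl] at this
        exact this
      have hs := hsplit i (by omega) hiN
      rw [show c^(i-1) = c^(i-2)*c by rw [← pow_succ]; congr 1; omega,
        show c^i = c^(i-2)*c*c by rw [mul_assoc, ← sq, ← pow_add]; congr 1; omega,
        show b^(N+2-i) = b^(N-i)*b*b by rw [mul_assoc, ← sq, ← pow_add]; congr 1; omega,
        show b^(N+1-i) = b^(N-i)*b by rw [← pow_succ]; congr 1; omega]
      linear_combination (-(c*(c^(i-2) + (1-α)*P (i-1) + (1-α)*dlt (i-2)))) * hf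
        + (-(b*((1-α)*Q (i+1) + b^(N-i))) - (1-α)*phi (i+1)) * hd + (1-α) * hs
  · -- I3
    rw [hw N hN, hw (N+1) (by omega)]
    rw [Nat.add_sub_cancel, show N+1+1 = N+2 from rfl, show N+1-N = 1 by omega,
      show N+1-(N+1) = 0 by omega, pow_one, pow_zero, one_mul]
    have ePN1 : P (N+1) = c * P N + c * dlt (N-1) := hPs N hN
    rw [ePN1]
    have eQN : Q N = phi (N+1) + b * Q (N+1) := hQs N (le_refl N)
    rw [eQN, hQN1, mul_zero, add_zero]
    have hs := hsplit N (by omega) (le_refl N)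
    rw [show c^N = c^(N-1)*c by rw [← pow_succ]; congr 1; omega]
    rw [hpN1, hpN2] at hs ⊢
    linear_combination hs

section main
variable (n : ℕ) (ρ T θ : ℝ) (N : ℕ)

lemma exp_pow (hρ : 0 < ρ) (hT : 0 < T) (hN : 0 < N) (d : ℕ) :
    Real.exp (-(ρ * T / N)) ^ d = Real.exp (-(ρ * ((d : ℝ) * T / N))) := by
  rw [← Real.exp_nat_mul]
  congr 1
  ring

lemma egrid_diff (hT : 0 < T) (hN : 0 < N) (i j : Fin (N+1)) (h : j.val ≤ i.val) :
    egrid T N i - egrid T N j = ((i.val - j.val : ℕ) : ℝ) * T / N := by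
  unfold egrid
  have : ((i.val - j.val : ℕ) : ℝ) = (i.val : ℝ) - (j.val : ℝ) := by
    push_cast [h]; ring
  rw [this]
  field_simp

lemma A_form (hρ : 0 < ρ) (hT : 0 < T) (hN : 2 ≤ N) (κ : ℝ)
    (hκ : κ = 2 * θ + ((n : ℝ) - 1) / 2) :
    Gam ρ θ (egrid T N) + ((n : ℝ) - 1) • GamT ρ (egrid T N)
      = Matrix.of (fun i j : Fin (N+1) =>
          toep n κ (Real.exp (-(ρ * T / N))) i.val j.val) := by
  have hN0 : (0:ℕ) < N := by omega
  ext i j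
  simp only [Matrix.add_apply, Matrix.smul_apply, Gam, GamT, Matrix.of_apply, smul_eq_mul]
  rcases lt_trichotomy i j with hij | hij | hij
  · have hij' : i.val < j.val := hij
    rw [if_neg (Fin.ne_of_lt hij), if_pos hij, mul_zero, add_zero, add_zero, toep_gt hij']
    rw [exp_pow ρ T N hρ hT hN0]
    congr 2
    rw [abs_sub_comm, abs_of_nonneg (by
      rw [egrid_diff T N hT hN0 j i (le_of_lt hij')]
      positivity)]
    rw [egrid_diff T N hT hN0 j i (le_of_lt hij')]
  · subst hij
    rw [if_pos rfl, if_neg (lt_irrefl i), if_pos rfl, toep_diag, sub_self, abs_zero, mul_zero,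
      neg_zero, Real.exp_zero, hκ]
    ring
  · have hij' : j.val < i.val := hij
    rw [if_neg (Fin.ne_of_gt hij), if_neg (not_lt.2 (le_of_lt hij)),
      if_neg (Fin.ne_of_gt hij), toep_lt hij']
    rw [exp_pow ρ T N hρ hT hN0]
    have hd : egrid T N i - egrid T N j = ((i.val - j.val : ℕ) : ℝ) * T / N :=
      egrid_diff T N hT hN0 i j (le_of_lt hij')
    rw [abs_of_nonneg (by rw [hd]; positivity), hd]
    ring

lemma G0_form (hρ : 0 < ρ) (hT : 0 < T) (hN : 2 ≤ N) :
    Gam ρ 0 (egrid T N)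
      = Matrix.of (fun i j : Fin (N+1) =>
          toep 1 0 (Real.exp (-(ρ * T / N))) i.val j.val) := by
  have h := A_form 1 ρ T 0 N hρ hT hN 0 (by norm_num)
  rw [show ((1:ℕ):ℝ) - 1 = 0 by norm_num, zero_smul, add_zero] at h
  exact h

end main

section main2
variable (n : ℕ) (ρ T θ : ℝ) (N : ℕ)

lemma GamT_sym (hρ : 0 < ρ) (hT : 0 < T) (hN : 2 ≤ N) :
    GamT ρ (egrid T N) + (GamT ρ (egrid T N))ᵀ = Gam ρ 0 (egrid T N) := by
  have hN0 : (0:ℕ) < N := by omega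
  ext i j
  simp only [Matrix.add_apply, Matrix.transpose_apply, GamT, Gam, Matrix.of_apply]
  rcases lt_trichotomy i j with hij | hij | hij
  · rw [if_pos hij, if_neg (not_lt.2 (le_of_lt hij)), if_neg (Fin.ne_of_gt hij),
      if_neg (Fin.ne_of_lt hij), zero_add, add_zero]
    congr 2
    rw [abs_sub_comm, abs_of_nonneg (by
      rw [egrid_diff T N hT hN0 j i (le_of_lt (show i.val < j.val from hij))]; positivity)]
  · subst hij
    rw [if_neg (lt_irrefl i), if_pos rfl, if_pos rfl, sub_self, abs_zero, mul_zero, neg_zero,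
      Real.exp_zero]
    norm_num
  · rw [if_neg (not_lt.2 (le_of_lt hij)), if_neg (Fin.ne_of_gt hij), if_pos hij, add_zero,
      if_neg (Fin.ne_of_gt hij), add_zero]
    congr 2
    rw [abs_of_nonneg (by
      rw [egrid_diff T N hT hN0 i j (le_of_lt (show j.val < i.val from hij))]; positivity)]

lemma Gam_theta_split (hρ : 0 < ρ) (hT : 0 < T) (hN : 2 ≤ N) :
    Gam ρ θ (egrid T N) = Gam ρ 0 (egrid T N) + (2*θ) • (1 : Matrix (Fin (N+1)) (Fin (N+1)) ℝ) := by
  ext i j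
  simp only [Matrix.add_apply, Matrix.smul_apply, Gam, Matrix.of_apply, Matrix.one_apply,
    smul_eq_mul]
  by_cases h : i = j
  · rw [if_pos h, if_pos h, if_pos h]; ring
  · rw [if_neg h, if_neg h, if_neg h]; ring

lemma A_posdef (hn : 2 ≤ n) (hρ : 0 < ρ) (hT : 0 < T) (hθ : 0 ≤ θ) (hN : 2 ≤ N) (κ : ℝ)
    (hκ : κ = 2 * θ + ((n : ℝ) - 1) / 2) (x : Fin (N+1) → ℝ) (hx : x ≠ 0) :
    0 < x ⬝ᵥ (Matrix.of (fun i j : Fin (N+1) =>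
        toep n κ (Real.exp (-(ρ * T / N))) i.val j.val)).mulVec x := by
  set α := Real.exp (-(ρ * T / N)) with hα
  have hα0 : 0 < α := Real.exp_pos _
  have hα1 : α < 1 := by
    rw [hα, Real.exp_lt_one_iff]
    have hNN : (0:ℝ) < N := by
      have : (0:ℕ) < N := by omega
      exact_mod_cast this
    have : (0:ℝ) < ρ*T/N := by positivity
    linarith
  have hG0 : 0 < x ⬝ᵥ (Gam ρ 0 (egrid T N)).mulVec x := by
    rw [G0_form ρ T N hρ hT hN]
    exact G0_pd N α hα0 hα1 x hx
  have hxx : 0 ≤ x ⬝ᵥ x := by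
    apply Finset.sum_nonneg
    intro i _
    exact mul_self_nonneg _
  have hGT : x ⬝ᵥ (GamT ρ (egrid T N)).mulVec x
      = (1/2) * (x ⬝ᵥ (Gam ρ 0 (egrid T N)).mulVec x) := by
    have h2 : x ⬝ᵥ ((GamT ρ (egrid T N)) + (GamT ρ (egrid T N))ᵀ).mulVec x
        = 2 * (x ⬝ᵥ (GamT ρ (egrid T N)).mulVec x) := by
      rw [Matrix.add_mulVec, dotProduct_add]
      have : x ⬝ᵥ (GamT ρ (egrid T N))ᵀ.mulVec x
          = x ⬝ᵥ (GamT ρ (egrid T N)).mulVec x := by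
        rw [Matrix.mulVec_transpose, dotProduct_comm, ← Matrix.dotProduct_mulVec]
      rw [this]; ring
    rw [GamT_sym ρ T N hρ hT hN] at h2
    linarith
  rw [← A_form n ρ T θ N hρ hT hN κ hκ]
  rw [Matrix.add_mulVec, dotProduct_add, Matrix.smul_mulVec, dotProduct_smul,
    Gam_theta_split ρ T θ N hρ hT hN, Matrix.add_mulVec, dotProduct_add,
    Matrix.smul_mulVec, dotProduct_smul, Matrix.one_mulVec]
  rw [hGT]
  have hn1 : (1:ℝ) ≤ (n:ℝ) := by exact_mod_cast Nat.one_le_of_lt hn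
  have : (0:ℝ) ≤ ((n:ℝ)-1) * ((1/2) * (x ⬝ᵥ (Gam ρ 0 (egrid T N)).mulVec x)) := by
    apply mul_nonneg (by linarith)
    positivity
  simp only [smul_eq_mul]
  nlinarith [mul_nonneg (by linarith : (0:ℝ) ≤ 2*θ) hxx]

end main2


/-- Closed form of the components of `ν` in terms of the leading principal minors `δ_k` of
`B` and the sequence `φ` (paper index `i ∈ {1,…,N+1}` corresponds to Lean index `i.val`). -/
theorem stmt5 (n : ℕ) (hn : 2 ≤ n) (ρ T θ : ℝ) (hρ : 0 < ρ) (hT : 0 < T) (hθ : 0 ≤ θ)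
    (N : ℕ) (hN : 2 ≤ N) (κ α : ℝ)
    (hκ : κ = 2 * θ + ((n : ℝ) - 1) / 2) (hα : α = Real.exp (-(ρ * T / N)))
    (dlt : ℕ → ℝ)
    (hdlt : ∀ k, dlt k = (Matrix.of (fun i j : Fin k => Bf N n κ α i.val j.val)).det)
    (phi : ℕ → ℝ) (hphi : ∀ k, phi k = psiSeq n κ α (N + 2 - k)) :
    dlt (N + 1) ≠ 0 ∧
    nuN n N ρ T θ 0 = ((1 - α) / dlt (N + 1)) *
      (phi 2 + (1 - α) * ∑ j ∈ Finset.Icc 2 N, (α * κ) ^ (j - 1) * phi (j + 1)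
        + (α * κ) ^ N) ∧
    nuN n N ρ T θ (Fin.last N) = ((1 - α) / dlt (N + 1)) *
      ((α * (κ + 1 - (n : ℝ))) ^ N
        + (1 - α) * ∑ j ∈ Finset.Icc 2 N, (α * (κ + 1 - (n : ℝ))) ^ (N + 1 - j) * dlt (j - 1)
        + dlt N) ∧
    ∀ i : Fin (N + 1), 1 ≤ i.val → i.val ≤ N - 1 →
      nuN n N ρ T θ i = ((1 - α) / dlt (N + 1)) *
        ((α * (κ + 1 - (n : ℝ))) ^ i.val * phi (i.val + 2)
          + (1 - α) * ∑ j ∈ Finset.Icc 2 i.val,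
              (α * (κ + 1 - (n : ℝ))) ^ (i.val + 1 - j) * dlt (j - 1) * phi (i.val + 2)
          + (1 - α) * ∑ j ∈ Finset.Icc (i.val + 1) N,
              (α * κ) ^ (j - (i.val + 1)) * dlt i.val * phi (j + 1)
          + (α * κ) ^ (N - i.val) * dlt i.val) := by
  have hα0 : 0 < α := hα ▸ Real.exp_pos _
  have hα1 : α < 1 := by
    rw [hα, Real.exp_lt_one_iff]
    have hNN : (0:ℝ) < N := by
      have : (0:ℕ) < N := by omega
      exact_mod_cast this
    have : (0:ℝ) < ρ*T/N := by positivity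
    linarith
  set Aof := Matrix.of (fun i j : Fin (N+1) => toep n κ α i.val j.val) with hAof
  set Bmat := Matrix.of (fun i j : Fin (N+1) => Bf N n κ α i.val j.val) with hBmat
  set Lmat := Matrix.of (fun i j : Fin (N+1) => Lf N α i.val j.val) with hLmat
  have hAform : Gam ρ θ (egrid T N) + ((n:ℝ)-1) • GamT ρ (egrid T N) = Aof := by
    rw [A_form n ρ T θ N hρ hT hN κ hκ, hAof, hα]
  have hdetA : Aof.det ≠ 0 := by
    intro h
    obtain ⟨v, hv0, hv⟩ := Matrix.exists_mulVec_eq_zero_iff.2 h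
    have hp := A_posdef n ρ T θ N hn hρ hT hθ hN κ hκ v hv0
    rw [← hα, ← hAof] at hp
    rw [hv, dotProduct_zero] at hp
    exact lt_irrefl 0 hp
  have hLB : Lmat * Aof = Bmat := by
    ext i j
    rw [Matrix.mul_apply]
    simp only [hLmat, hAof, hBmat, Matrix.of_apply]
    exact LA_entry N n κ α hN i.val j.val (by omega) (by omega)
  have hL1 : Lmat * (Matrix.of (fun i j : Fin (N+1) => toep 1 0 α i.val j.val))
      = (1-α^2) • (1 : Matrix (Fin (N+1)) (Fin (N+1)) ℝ) := by
    ext i j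
    rw [Matrix.mul_apply]
    simp only [hLmat, Matrix.of_apply, Matrix.smul_apply, Matrix.one_apply, smul_eq_mul]
    rw [show (∑ k : Fin (N+1), Lf N α i.val k.val * toep 1 0 α k.val j.val)
        = Bf N 1 0 α i.val j.val from LA_entry N 1 0 α hN i.val j.val (by omega) (by omega)]
    unfold Bf
    by_cases h : i = j
    · have hv : i.val = j.val := by rw [h]
      rw [if_pos hv, if_pos h]
      push_cast
      split_ifs <;> ring
    · have hne : ¬ i.val = j.val := fun hh => h (Fin.ext hh)
      rw [if_neg hne, if_neg h, mul_zero]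
      split_ifs <;> ring
  have hdetL : Lmat.det ≠ 0 := by
    have hd := congrArg Matrix.det hL1
    rw [Matrix.det_mul, Matrix.det_smul, Matrix.det_one, mul_one] at hd
    intro h
    rw [h, zero_mul] at hd
    have h2 : (1-α^2) ≠ 0 := by nlinarith
    exact (pow_ne_zero _ h2) hd.symm
  have hdetB : Bmat.det ≠ 0 := by
    rw [← hLB, Matrix.det_mul]
    exact mul_ne_zero hdetL hdetA
  have hDne : dlt (N+1) ≠ 0 := by
    rw [hdlt (N+1), ← hBmat]
    exact hdetB
  -- recursions for dlt
  have hd0 : dlt 0 = 1 := by rw [hdlt 0]; exact Matrix.det_fin_zero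
  have hd1 : dlt 1 = (1 + α^2*(κ-(n:ℝ)) + κ) - α*(α*κ) := by
    rw [hdlt 1, Matrix.det_fin_one, Matrix.of_apply]
    rw [show ((0 : Fin 1).val) = 0 from rfl, Bf_diag0]
    ring
  have hdrec : ∀ k, 1 ≤ k → k ≤ N-1 →
      dlt (k+1) = (1 + α^2*(κ-(n:ℝ)) + κ) * dlt k - (α*κ)*(α*(κ+1-(n:ℝ)))*dlt (k-1) := by
    intro k h1 h2
    obtain ⟨m, rfl⟩ : ∃ m, k = m+1 := ⟨k-1, by omega⟩
    rw [show m+1-1 = m from rfl, hdlt (m+1+1), hdlt (m+1), hdlt m]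
    rw [det_tri_succ (Bf N n κ α) (fun i j h => Bf_far h) m]
    rw [Bf_diag_mid (by omega) (by omega), Bf_sub rfl, Bf_super rfl]
    ring
  have hdN1 : dlt (N+1) = ((1 + α^2*(κ-(n:ℝ)) + κ) - α*(α*(κ+1-(n:ℝ)))) * dlt N
      - (α*κ)*(α*(κ+1-(n:ℝ)))*dlt (N-1) := by
    obtain ⟨m, hm⟩ : ∃ m, N = m+1 := ⟨N-1, by omega⟩
    subst hm
    rw [show m+1-1 = m from rfl, hdlt (m+1+1), hdlt (m+1), hdlt m]
    rw [det_tri_succ (Bf (m+1) n κ α) (fun i j h => Bf_far h) m]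
    rw [Bf_diagN (by omega), Bf_sub rfl, Bf_super rfl]
    ring
  -- phi facts
  have hpN2 : phi (N+2) = 1 := by
    rw [hphi (N+2), show N+2-(N+2) = 0 by omega]
    simp [psiSeq]
  have hpN1 : phi (N+1) = (1 + α^2*(κ-(n:ℝ)) + κ) - α*(α*(κ+1-(n:ℝ))) := by
    rw [hphi (N+1), show N+2-(N+1) = 1 by omega]
    simp [psiSeq]
    ring
  have hprec : ∀ k, 2 ≤ k → k ≤ N →
      phi k = (1 + α^2*(κ-(n:ℝ)) + κ) * phi (k+1) - (α*κ)*(α*(κ+1-(n:ℝ)))*phi (k+2) := by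
    intro k h2 hk
    rw [hphi k, hphi (k+1), hphi (k+2), show N+2-k = (N-k)+2 by omega,
      show N+2-(k+1) = (N-k)+1 by omega, show N+2-(k+2) = N-k by omega]
    rw [psiSeq]
    ring
  obtain ⟨I1, I2, I3⟩ := tri_solve N hN α (1 + α^2*(κ-(n:ℝ)) + κ) (α*κ) (α*(κ+1-(n:ℝ)))
    dlt phi hd0 hd1 hdrec hdN1 hpN2 hpN1 hprec
  set ν := nuN n N ρ T θ with hν
  have hAν : Aof.mulVec ν = 1 := by
    rw [hν]
    unfold nuN
    rw [hAform, Matrix.mulVec_mulVec,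
      Matrix.mul_nonsing_inv _ hdetA.isUnit,
      Matrix.one_mulVec]
  set rv : Fin (N+1) → ℝ :=
    fun i => if i.val = 0 then 1-α else if i.val = N then 1-α else (1-α)^2 with hrv
  have hLone : Lmat.mulVec 1 = rv := by
    funext i
    have he : Lmat.mulVec 1 i = ∑ k : Fin (N+1), Lf N α i.val k.val := by
      simp [Matrix.mulVec, dotProduct, hLmat]
    rw [he]
    show _ = if (i:ℕ) = 0 then 1-α else if (i:ℕ) = N then 1-α else (1-α)^2
    by_cases hi0 : i.val = 0
    · rw [fin_sum_tri0 (N:=N) (by omega) (fun k => Lf N α i.val k)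
        (fun k hk => Lf_far (by omega))]
      rw [if_pos hi0, hi0, Lf_diag0, Lf_super rfl]
      ring
    · by_cases hiN : i.val = N
      · rw [fin_sum_triN (N:=N) (by omega) (fun k => Lf N α i.val k)
          (fun k hk => Lf_far (by omega))]
        rw [if_neg hi0, if_pos hiN, hiN, Lf_diagN (by omega), Lf_sub (by omega)]
        ring
      · rw [fin_sum_mid (N:=N) (i:=i.val) (by omega) (by omega) (fun k => Lf N α i.val k)
          (fun k hk => Lf_far (by omega))]
        rw [if_neg hi0, if_neg hiN, Lf_diag_mid (by omega) (by omega), Lf_sub (by omega),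
          Lf_super rfl]
        ring
  have hBν : Bmat.mulVec ν = rv := by rw [← hLB, ← Matrix.mulVec_mulVec, hAν, hLone]
  set vv : Fin (N+1) → ℝ :=
    fun i => ((1-α)/dlt (N+1)) * wseq N α (α*κ) (α*(κ+1-(n:ℝ))) dlt phi (i.val+1) with hvv
  have hBv : Bmat.mulVec vv = rv := by
    funext i
    have he : Bmat.mulVec vv i = ∑ k : Fin (N+1), Bf N n κ α i.val k.val
        * (((1-α)/dlt (N+1)) * wseq N α (α*κ) (α*(κ+1-(n:ℝ))) dlt phi (k.val+1)) := by
      simp [Matrix.mulVec, dotProduct, hBmat, hvv]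
    rw [he]
    show _ = if (i:ℕ) = 0 then 1-α else if (i:ℕ) = N then 1-α else (1-α)^2
    by_cases hi0 : i.val = 0
    · rw [fin_sum_tri0 (N:=N) (by omega)
        (fun k => Bf N n κ α i.val k
          * (((1-α)/dlt (N+1)) * wseq N α (α*κ) (α*(κ+1-(n:ℝ))) dlt phi (k+1)))
        (fun k hk => by
          show Bf N n κ α i.val k * _ = 0
          rw [Bf_far (by omega), zero_mul])]
      rw [if_pos hi0, hi0, Bf_diag0, Bf_super rfl,
        show (0:ℕ)+1 = 1 from rfl, show (1:ℕ)+1 = 2 from rfl]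
      have harr : (1 - (n:ℝ)*α^2 + κ)
            * (((1-α)/dlt (N+1)) * wseq N α (α*κ) (α*(κ+1-(n:ℝ))) dlt phi 1)
          + (-(α*κ)) * (((1-α)/dlt (N+1)) * wseq N α (α*κ) (α*(κ+1-(n:ℝ))) dlt phi 2)
          = ((1-α)/dlt (N+1)) * (((1 + α^2*(κ-(n:ℝ)) + κ) - α*(α*κ))
              * wseq N α (α*κ) (α*(κ+1-(n:ℝ))) dlt phi 1
            - (α*κ) * wseq N α (α*κ) (α*(κ+1-(n:ℝ))) dlt phi 2) := by
        ring
      rw [harr, I1]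
      exact div_mul_cancel₀ _ hDne
    · by_cases hiN : i.val = N
      · rw [fin_sum_triN (N:=N) (by omega)
          (fun k => Bf N n κ α i.val k
            * (((1-α)/dlt (N+1)) * wseq N α (α*κ) (α*(κ+1-(n:ℝ))) dlt phi (k+1)))
          (fun k hk => by
            show Bf N n κ α i.val k * _ = 0
            rw [Bf_far (by omega), zero_mul])]
        rw [if_neg hi0, if_pos hiN, hiN, Bf_diagN (by omega), Bf_sub (by omega)]
        rw [show N-1+1 = N by omega]
        have harr : (-(α*(κ+1-(n:ℝ))))
              * (((1-α)/dlt (N+1)) * wseq N α (α*κ) (α*(κ+1-(n:ℝ))) dlt phi N)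
            + (1 - α^2 + κ)
              * (((1-α)/dlt (N+1)) * wseq N α (α*κ) (α*(κ+1-(n:ℝ))) dlt phi (N+1))
            = ((1-α)/dlt (N+1)) * (-((α*(κ+1-(n:ℝ)))
                * wseq N α (α*κ) (α*(κ+1-(n:ℝ))) dlt phi N)
              + ((1 + α^2*(κ-(n:ℝ)) + κ) - α*(α*(κ+1-(n:ℝ))))
                * wseq N α (α*κ) (α*(κ+1-(n:ℝ))) dlt phi (N+1)) := by
          ring
        rw [harr, I3]
        exact div_mul_cancel₀ _ hDne
      · rw [fin_sum_mid (N:=N) (i:=i.val) (by omega) (by omega)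
          (fun k => Bf N n κ α i.val k
            * (((1-α)/dlt (N+1)) * wseq N α (α*κ) (α*(κ+1-(n:ℝ))) dlt phi (k+1)))
          (fun k hk => by
            show Bf N n κ α i.val k * _ = 0
            rw [Bf_far (by omega), zero_mul])]
        rw [if_neg hi0, if_neg hiN, Bf_diag_mid (by omega) (by omega), Bf_sub (by omega),
          Bf_super rfl]
        rw [show i.val-1+1 = i.val by omega]
        have hI := I2 (i.val+1) (by omega) (by omega)
        rw [show i.val+1-1 = i.val from rfl] at hI
        have harr : (-(α*(κ+1-(n:ℝ))))
              * (((1-α)/dlt (N+1)) * wseq N α (α*κ) (α*(κ+1-(n:ℝ))) dlt phi i.val)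
            + (1 + α^2*(κ-(n:ℝ)) + κ)
              * (((1-α)/dlt (N+1)) * wseq N α (α*κ) (α*(κ+1-(n:ℝ))) dlt phi (i.val+1))
            + (-(α*κ))
              * (((1-α)/dlt (N+1)) * wseq N α (α*κ) (α*(κ+1-(n:ℝ))) dlt phi (i.val+1+1))
            = ((1-α)/dlt (N+1)) * (-((α*(κ+1-(n:ℝ)))
                * wseq N α (α*κ) (α*(κ+1-(n:ℝ))) dlt phi i.val)
              + (1 + α^2*(κ-(n:ℝ)) + κ) * wseq N α (α*κ) (α*(κ+1-(n:ℝ))) dlt phi (i.val+1)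
              - (α*κ) * wseq N α (α*κ) (α*(κ+1-(n:ℝ))) dlt phi (i.val+1+1)) := by
          ring
        rw [harr, hI]
        rw [div_mul_eq_mul_div, div_eq_iff hDne]
        ring
  have hveq : ν = vv := by
    have hBinv : Bmat⁻¹ * Bmat = 1 :=
      Matrix.nonsing_inv_mul Bmat hdetB.isUnit
    calc ν = (Bmat⁻¹ * Bmat).mulVec ν := by rw [hBinv, Matrix.one_mulVec]
    _ = Bmat⁻¹.mulVec (Bmat.mulVec ν) := by rw [Matrix.mulVec_mulVec]
    _ = Bmat⁻¹.mulVec (Bmat.mulVec vv) := by rw [hBν, hBv]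
    _ = vv := by rw [Matrix.mulVec_mulVec, hBinv, Matrix.one_mulVec]
  refine ⟨hDne, ?_, ?_, ?_⟩
  · rw [hveq, hvv]
    simp only [Fin.val_zero, zero_add]
    congr 1
    unfold wseq
    rw [show (1:ℕ)-1 = 0 from rfl, pow_zero, one_mul, show max 1 2 = 2 from rfl,
      show Finset.Icc 2 0 = ∅ from rfl, Finset.sum_empty, mul_zero, add_zero,
      show N+1-1 = N from rfl, hd0, mul_one]
    rw [show (∑ j ∈ Finset.Icc 2 N, (α*κ)^(j-1) * 1 * phi (j+1))
      = ∑ j ∈ Finset.Icc 2 N, (α*κ)^(j-1) * phi (j+1)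
      from Finset.sum_congr rfl (fun j _ => by ring)]
  · rw [hveq, hvv]
    simp only [Fin.val_last]
    congr 1
    unfold wseq
    rw [Nat.add_sub_cancel, show N+1+1 = N+2 from rfl, hpN2, mul_one,
      max_eq_left (show 2 ≤ N+1 by omega),
      Finset.Icc_eq_empty (show ¬ N+1 ≤ N by omega), Finset.sum_empty, mul_zero,
      add_zero, show N+1-(N+1) = 0 by omega, pow_zero, one_mul]
    rw [show (∑ j ∈ Finset.Icc 2 N, (α*(κ+1-(n:ℝ)))^(N+1-j) * dlt (j-1) * 1)
      = ∑ j ∈ Finset.Icc 2 N, (α*(κ+1-(n:ℝ)))^(N+1-j) * dlt (j-1)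
      from Finset.sum_congr rfl (fun j _ => by ring)]
  · intro i h1 h2
    rw [hveq, hvv]
    show ((1-α)/dlt (N+1)) * wseq N α (α*κ) (α*(κ+1-(n:ℝ))) dlt phi (i.val+1) = _
    congr 1
    unfold wseq
    rw [Nat.add_sub_cancel, show i.val+1+1 = i.val+2 from rfl, max_eq_left (by omega),
      show N+1-(i.val+1) = N-i.val by omega]
end
end

section
/- Let n ≥ 2 be an integer, κ ≥ (n−1)/2, α ∈ (0,1), and N ≥ 2. With R := √(α⁴(κ−n)² − 2α²(κ(κ+1)+n(1−κ)) + (κ+1)²) (which is a positive real number under these hypotheses), m_± := (1 + α²(κ−n) + κ ± R)/2, and c_± := (±(1 − α²(κ+n) + κ) + R)/(2R), the k-th leading principal minor δ_k of the matrix B satisfies, for every k ∈ {1,…,N}: δ_k = c_+·m_+^k + c_−·m_−^k. -/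
open Matrix Finset

noncomputable section

lemma det_tridiag_step (f : ℕ → ℕ → ℝ)
    (hf : ∀ i j : ℕ, j + 2 ≤ i ∨ i + 2 ≤ j → f i j = 0) (k : ℕ) :
    (Matrix.of fun i j : Fin (k+2) => f i j).det =
      f (k+1) (k+1) * (Matrix.of fun i j : Fin (k+1) => f i j).det
      - f (k+1) k * f k (k+1) * (Matrix.of fun i j : Fin k => f i j).det := by
  rw [Matrix.det_succ_row _ (Fin.last (k+1))]
  rw [Fin.sum_univ_castSucc, Fin.sum_univ_castSucc]
  have hz : ∀ j : Fin k,
      (-1:ℝ) ^ ((Fin.last (k+1) : ℕ) + ((j.castSucc.castSucc : Fin (k+2)) : ℕ))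
        * (Matrix.of fun i j : Fin (k+2) => f i j) (Fin.last (k+1)) j.castSucc.castSucc
        * ((Matrix.of fun i j : Fin (k+2) => f i j).submatrix (Fin.last (k+1)).succAbove
            (j.castSucc.castSucc).succAbove).det = 0 := by
    intro j
    have : f (k+1) (j:ℕ) = 0 := hf _ _ (Or.inl (by omega))
    simp [this]
  rw [Finset.sum_eq_zero (fun j _ => hz j), zero_add]
  have h2 : (Matrix.of fun i j : Fin (k+2) => f i j).submatrix (Fin.last (k+1)).succAbove
      (Fin.last (k+1)).succAbove = Matrix.of fun i j : Fin (k+1) => f i j := by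
    ext i j; simp [Fin.succAbove_last]
  have h1m : (Matrix.of fun i j : Fin (k+2) => f i j).submatrix (Fin.last (k+1)).succAbove
      (Fin.last k).castSucc.succAbove
      = Matrix.of (fun i j : Fin (k+1) => f i (if (j:ℕ) < k then (j:ℕ) else (j:ℕ)+1)) := by
    ext i j
    simp only [submatrix_apply, of_apply, Fin.succAbove_last]
    congr 1
    simp [Fin.succAbove, Fin.lt_def]
    split_ifs <;> simp
  rw [h1m, h2]
  have h1 : (Matrix.of (fun i j : Fin (k+1) =>
      f i (if (j:ℕ) < k then (j:ℕ) else (j:ℕ)+1))).det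
      = f k (k+1) * (Matrix.of fun i j : Fin k => f i j).det := by
    rw [Matrix.det_succ_column _ (Fin.last k), Fin.sum_univ_castSucc]
    have hz' : ∀ i : Fin k,
        (-1:ℝ) ^ (((i.castSucc : Fin (k+1)) : ℕ) + ((Fin.last k : Fin (k+1)) : ℕ))
          * (Matrix.of (fun i j : Fin (k+1) => f i (if (j:ℕ) < k then (j:ℕ) else (j:ℕ)+1)))
              i.castSucc (Fin.last k)
          * ((Matrix.of (fun i j : Fin (k+1) => f i (if (j:ℕ) < k then (j:ℕ) else (j:ℕ)+1))).submatrix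
              i.castSucc.succAbove (Fin.last k).succAbove).det = 0 := by
      intro i
      have : f (i:ℕ) (k+1) = 0 := hf _ _ (Or.inr (by omega))
      simp [this]
    rw [Finset.sum_eq_zero (fun i _ => hz' i), zero_add]
    have h3 : ((Matrix.of (fun i j : Fin (k+1) =>
        f i (if (j:ℕ) < k then (j:ℕ) else (j:ℕ)+1))).submatrix
        (Fin.last k).succAbove (Fin.last k).succAbove)
        = Matrix.of fun i j : Fin k => f i j := by
      ext i j; simp [Fin.succAbove_last]
    rw [h3]
    have e : (-1:ℝ) ^ (((Fin.last k : Fin (k+1)):ℕ) + ((Fin.last k : Fin (k+1)):ℕ)) = 1 := by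
      rw [show ((Fin.last k : Fin (k+1)):ℕ) + ((Fin.last k : Fin (k+1)):ℕ) = 2*k by
        simp [Fin.val_last]; ring, pow_mul]
      norm_num
    rw [e]
    simp [Fin.val_last]
  rw [h1]
  simp only [Fin.val_last, Fin.coe_castSucc, of_apply]
  have e1 : (-1:ℝ) ^ (k + 1 + k) = -1 := by
    have : k + 1 + k = 2*k+1 := by omega
    rw [this, pow_succ, pow_mul]; simp
  have e2 : (-1:ℝ) ^ (k + 1 + (k+1)) = 1 := by
    have : k + 1 + (k+1) = 2*(k+1) := by omega
    rw [this, pow_mul]; simp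
  rw [e1, e2]; ring

set_option maxHeartbeats 1000000 in
/-- Closed form of the leading principal minors of `B`:
`δ_k = c₊ m₊^k + c₋ m₋^k` for `1 ≤ k ≤ N` (and `R > 0`). -/
theorem stmt7 (n : ℕ) (hn : 2 ≤ n) (κ α : ℝ) (hκ : ((n : ℝ) - 1) / 2 ≤ κ)
    (hα0 : 0 < α) (hα1 : α < 1) (N : ℕ) (hN : 2 ≤ N)
    (R : ℝ)
    (hR : R = Real.sqrt (α ^ 4 * (κ - (n : ℝ)) ^ 2
      - 2 * α ^ 2 * (κ * (κ + 1) + (n : ℝ) * (1 - κ)) + (κ + 1) ^ 2))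
    (mp mm cp cm : ℝ)
    (hmp : mp = (1 + α ^ 2 * (κ - (n : ℝ)) + κ + R) / 2)
    (hmm : mm = (1 + α ^ 2 * (κ - (n : ℝ)) + κ - R) / 2)
    (hcp : cp = ((1 - α ^ 2 * (κ + (n : ℝ)) + κ) + R) / (2 * R))
    (hcm : cm = (-(1 - α ^ 2 * (κ + (n : ℝ)) + κ) + R) / (2 * R)) :
    0 < R ∧
    ∀ k : ℕ, 1 ≤ k → k ≤ N →
      (Matrix.of (fun i j : Fin k => Bf N n κ α i.val j.val)).det
        = cp * mp ^ k + cm * mm ^ k := by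
  have hn2 : (2:ℝ) ≤ (n:ℝ) := by exact_mod_cast hn
  have hκ0 : 0 < κ := by linarith
  have hα2 : α ^ 2 < 1 := by nlinarith
  have hEpos : 0 < α ^ 4 * (κ - (n : ℝ)) ^ 2
      - 2 * α ^ 2 * (κ * (κ + 1) + (n : ℝ) * (1 - κ)) + (κ + 1) ^ 2 := by
    rcases lt_or_ge (κ + 1) (n:ℝ) with h | h
    · -- discriminant negative: (κ-n)² E = (..)² - 4nκ(κ+1-n) with last term > 0
      have id1 : (κ-(n:ℝ))^2 * (α ^ 4 * (κ - (n : ℝ)) ^ 2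
          - 2 * α ^ 2 * (κ * (κ + 1) + (n : ℝ) * (1 - κ)) + (κ + 1) ^ 2)
          = (α^2*(κ-(n:ℝ))^2 - (κ*(κ+1)+(n:ℝ)*(1-κ)))^2 - 4*(n:ℝ)*κ*(κ+1-(n:ℝ)) := by ring
      have h4 : 0 < 4*(n:ℝ)*κ*((n:ℝ)-(κ+1)) :=
        mul_pos (mul_pos (by linarith) hκ0) (by linarith)
      have h5 : (0:ℝ) < (κ-(n:ℝ))^2 := by nlinarith
      nlinarith [sq_nonneg (α^2*(κ-(n:ℝ))^2 - (κ*(κ+1)+(n:ℝ)*(1-κ)))]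
    · rcases eq_or_lt_of_le h with h' | h'
      · -- κ + 1 = n
        have hκn : κ = (n:ℝ) - 1 := by linarith
        have hlt : α^2 - (n:ℝ) < 0 := by linarith
        rw [hκn]
        nlinarith [mul_pos_of_neg_of_neg hlt hlt]
      · -- κ + 1 > n: E = (n-1)² + 2(1-α²)(κ(n+1)-n(n-1)) + ((κ-n)(1-α²))²
        have id2 : α ^ 4 * (κ - (n : ℝ)) ^ 2
            - 2 * α ^ 2 * (κ * (κ + 1) + (n : ℝ) * (1 - κ)) + (κ + 1) ^ 2
            = ((n:ℝ)-1)^2 + 2*(1-α^2)*(κ*((n:ℝ)+1) - (n:ℝ)*((n:ℝ)-1))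
              + ((κ-(n:ℝ))*(1-α^2))^2 := by ring
        have t1 : 0 < κ*((n:ℝ)+1) - (n:ℝ)*((n:ℝ)-1) := by nlinarith
        have t2 : (0:ℝ) < 1 - α^2 := by linarith
        rw [id2]
        have := sq_nonneg ((κ-(n:ℝ))*(1-α^2))
        have := sq_nonneg ((n:ℝ)-1)
        have := mul_pos t2 t1
        linarith
  have hRpos : 0 < R := by rw [hR]; exact Real.sqrt_pos.mpr hEpos
  have hRne : R ≠ 0 := ne_of_gt hRpos
  have hR2 : R^2 = α ^ 4 * (κ - (n : ℝ)) ^ 2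
      - 2 * α ^ 2 * (κ * (κ + 1) + (n : ℝ) * (1 - κ)) + (κ + 1) ^ 2 := by
    rw [hR]; exact Real.sq_sqrt hEpos.le
  have hRR : R^2 = (1 + α^2*(κ-(n:ℝ)) + κ)^2 - 4*(α^2*κ*(κ+1-(n:ℝ))) := by
    linear_combination hR2
  have hmp2 : mp^2 = (1 + α^2*(κ-(n:ℝ)) + κ)*mp - α^2*κ*(κ+1-(n:ℝ)) := by
    rw [hmp]; linear_combination hRR/4
  have hmm2 : mm^2 = (1 + α^2*(κ-(n:ℝ)) + κ)*mm - α^2*κ*(κ+1-(n:ℝ)) := by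
    rw [hmm]; linear_combination hRR/4
  have hBf0 : ∀ i j : ℕ, j + 2 ≤ i ∨ i + 2 ≤ j → Bf N n κ α i j = 0 := by
    intro i j h
    unfold Bf
    rw [if_neg (by omega), if_neg (by omega), if_neg (by omega)]
  have key : ∀ k : ℕ, k ≤ N →
      (Matrix.of (fun i j : Fin k => Bf N n κ α i.val j.val)).det
        = cp * mp ^ k + cm * mm ^ k := by
    intro k
    induction k using Nat.strong_induction_on with
    | _ k ih =>
      match k, ih with
      | 0, _ =>
        intro _
        rw [Matrix.det_fin_zero]
        simp only [pow_zero, mul_one]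
        rw [hcp, hcm]
        field_simp
        ring
      | 1, _ =>
        intro _
        rw [Matrix.det_fin_one]
        have e0 : Bf N n κ α 0 0 = 1 - (n:ℝ)*α^2 + κ := by
          unfold Bf; rw [if_pos rfl, if_pos rfl]
        show Bf N n κ α 0 0 = _
        rw [e0, hcp, hcm, hmp, hmm]
        field_simp
        ring_nf
      | (k+2), ih =>
        intro hk
        rw [det_tridiag_step _ hBf0 k]
        rw [ih (k+1) (by omega) (by omega), ih k (by omega) (by omega)]
        have e1 : Bf N n κ α (k+1) (k+1) = 1 + α^2*(κ-(n:ℝ)) + κ := by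
          unfold Bf; rw [if_pos rfl, if_neg (by omega), if_neg (by omega)]
        have e2 : Bf N n κ α (k+1) k = -(α*(κ+1-(n:ℝ))) := by
          unfold Bf; rw [if_neg (by omega), if_neg (by omega), if_pos (by omega)]
        have e3 : Bf N n κ α k (k+1) = -(α*κ) := by
          unfold Bf; rw [if_neg (by omega), if_pos rfl]
        rw [e1, e2, e3]
        linear_combination (-(cp*mp^k)) * hmp2 - (cm*mm^k) * hmm2
  exact ⟨hRpos, fun k _ hk2 => key k hk2⟩
end
end
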